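/- arXiv:2401.10989 — 6 statements merged into one kernel-verified Lean document; each statement's English description precedes it below -/
import Mathlib

section
/- Let u = (u_1, ..., u_d) be a random vector with independent, identically distributed, symmetric, standardized components (E u_i = 0, E u_i² = 1, E u_i³ = 0) and finite kurtosis E u_i⁴ = k_φ. Let C ∈ ℝ^{m×d} be a matrix whose columns outside an index set S ⊆ {1,...,d} are zero, m ∈ ℝ^m a vector, and z̄ ∈ ℝ^m arbitrary. Writing s = |S| = Σ_{j∈S} 1, one has E[ (1 + Σ_{j∈S} u_j²) ‖C u + m − z̄‖₂² ] ≤ (s + 1) ‖m − z̄‖₂² + (s + k_φ) ‖C‖_F². -/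
open MeasureTheory ProbabilityTheory

/-- Let `u` be a random vector in `ℝ^d` with i.i.d., symmetric, standardized
components (`E uᵢ = 0`, `E uᵢ² = 1`, `E uᵢ³ = 0`) and finite kurtosis `E uᵢ⁴ = kφ`. Let
`C ∈ ℝ^{k×d}` have its columns outside `S` equal to zero, and let `m, z̄ ∈ ℝ^k`. Then, with
`s = |S|`,
`E[(1 + ∑_{j∈S} uⱼ²) ‖C u + m − z̄‖₂²] ≤ (s+1) ‖m − z̄‖₂² + (s + kφ) ‖C‖_F²`. -/
theorem weighted_second_moment_location_scale_le
    {Ω : Type*} [MeasurableSpace Ω] (P : Measure Ω) [IsProbabilityMeasure P]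
    {d k : ℕ} (u : Ω → Fin d → ℝ)
    (hmeas : ∀ i, Measurable fun ω => u ω i)
    (hindep : iIndepFun (fun i ω => u ω i) P)
    (hident : ∀ i j, IdentDistrib (fun ω => u ω i) (fun ω => u ω j) P P)
    (hsymm : ∀ i, IdentDistrib (fun ω => u ω i) (fun ω => -u ω i) P P)
    (hL4 : ∀ i, MemLp (fun ω => u ω i) 4 P)
    (hmean : ∀ i, ∫ ω, u ω i ∂P = 0)
    (hvar : ∀ i, ∫ ω, (u ω i) ^ 2 ∂P = 1)
    (hthird : ∀ i, ∫ ω, (u ω i) ^ 3 ∂P = 0)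
    (kφ : ℝ) (hkurt : ∀ i, ∫ ω, (u ω i) ^ 4 ∂P = kφ)
    (S : Finset (Fin d))
    (C : Matrix (Fin k) (Fin d) ℝ) (hC : ∀ i j, j ∉ S → C i j = 0)
    (m zbar : Fin k → ℝ) :
    ∫ ω, (1 + ∑ j ∈ S, (u ω j) ^ 2) * ∑ i, (C.mulVec (u ω) i + m i - zbar i) ^ 2 ∂P
      ≤ ((S.card : ℝ) + 1) * (∑ i, (m i - zbar i) ^ 2)
        + ((S.card : ℝ) + kφ) * ∑ i, ∑ j, (C i j) ^ 2 := by
  classical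
  set b : Fin k → ℝ := fun i => m i - zbar i with hbdef
  set v : Fin k → Ω → ℝ := fun i ω => ∑ l ∈ S, C i l * u ω l with hvdef
  -- basic MemLp / integrability facts
  have h24 : (1:ENNReal)/2 = 1/4 + 1/4 := by
    rw [ENNReal.div_add_div_same, ENNReal.div_eq_div_iff] <;> norm_num
  have h12 : (1:ENNReal)/1 = 1/2 + 1/2 := by
    rw [ENNReal.div_add_div_same, ENNReal.div_eq_div_iff] <;> norm_num
  have prodL2 : ∀ f g : Ω → ℝ, MemLp f 4 P → MemLp g 4 P →
      MemLp (fun ω => f ω * g ω) 2 P := by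
    intro f g hf hg
    haveI : ENNReal.HolderTriple 4 4 2 := ⟨by simpa [one_div] using h24.symm⟩
    have := hg.smul (φ := f) hf (r := 2)
    simpa [smul_eq_mul, Pi.mul_def] using this
  have prodInt : ∀ f g : Ω → ℝ, MemLp f 2 P → MemLp g 2 P →
      Integrable (fun ω => f ω * g ω) P := by
    intro f g hf hg
    haveI : ENNReal.HolderTriple 2 2 1 := ⟨by simpa [one_div] using h12.symm⟩
    have := (hg.smul (φ := f) hf (r := 1)).integrable (le_refl 1)
    simpa [smul_eq_mul, Pi.mul_def] using this
  have hL2 : ∀ i, MemLp (fun ω => u ω i) 2 P :=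
    fun i => (hL4 i).mono_exponent (by norm_num)
  have hsq : ∀ j, MemLp (fun ω => (u ω j) ^ 2) 2 P := by
    intro j
    simpa [sq] using prodL2 _ _ (hL4 j) (hL4 j)
  have hIu : ∀ l, Integrable (fun ω => u ω l) P :=
    fun l => (hL2 l).integrable (by norm_num)
  have hIuu : ∀ l l', Integrable (fun ω => u ω l * u ω l') P :=
    fun l l' => prodInt _ _ (hL2 l) (hL2 l')
  have hIsq : ∀ j, Integrable (fun ω => (u ω j) ^ 2) P :=
    fun j => (hsq j).integrable (by norm_num)
  have hIsqu : ∀ j l, Integrable (fun ω => (u ω j) ^ 2 * u ω l) P :=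
    fun j l => prodInt _ _ (hsq j) (hL2 l)
  have hIsquu : ∀ j l l', Integrable (fun ω => (u ω j) ^ 2 * (u ω l * u ω l')) P :=
    fun j l l' => prodInt _ _ (hsq j) (prodL2 _ _ (hL4 l) (hL4 l'))
  -- independence-based product expectations
  have Emul : ∀ (j l : Fin d), j ≠ l → ∀ (f g : ℝ → ℝ), Measurable f → Measurable g →
      ∫ ω, f (u ω j) * g (u ω l) ∂P
        = (∫ ω, f (u ω j) ∂P) * ∫ ω, g (u ω l) ∂P := by
    intro j l hjl f g hf hg
    have hind : IndepFun (fun ω => f (u ω j)) (fun ω => g (u ω l)) P :=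
      (hindep.indepFun hjl).comp hf hg
    have := hind.integral_fun_mul_eq_mul_integral ((hf.comp (hmeas j)).aestronglyMeasurable)
      ((hg.comp (hmeas l)).aestronglyMeasurable)
    simpa [Pi.mul_apply] using this
  have E_uu : ∀ l l' : Fin d, ∫ ω, u ω l * u ω l' ∂P = if l = l' then 1 else 0 := by
    intro l l'
    by_cases h : l = l'
    · subst h; simp only [if_pos rfl]
      simpa [sq] using hvar l
    · rw [if_neg h]
      have := Emul l l' h id id measurable_id measurable_id
      simp only [id] at this
      rw [this, hmean l, zero_mul]
  have E_squ : ∀ j l : Fin d, ∫ ω, (u ω j) ^ 2 * u ω l ∂P = 0 := by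
    intro j l
    by_cases h : j = l
    · subst h
      have : (fun ω => (u ω j) ^ 2 * u ω j) = fun ω => (u ω j) ^ 3 := by
        funext ω; ring
      rw [this, hthird j]
    · have := Emul j l h (fun x => x ^ 2) id (measurable_id.pow_const 2) measurable_id
      simp only [id] at this
      rw [this, hmean l, mul_zero]
  have E4 : ∀ j l l' : Fin d, ∫ ω, (u ω j) ^ 2 * (u ω l * u ω l') ∂P
      = if l = l' then (if j = l then kφ else 1) else 0 := by
    intro j l l'
    by_cases h : l = l'
    · subst h
      rw [if_pos rfl]
      by_cases hj : j = l
      · subst hj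
        rw [if_pos rfl]
        have : (fun ω => (u ω j) ^ 2 * (u ω j * u ω j)) = fun ω => (u ω j) ^ 4 := by
          funext ω; ring
        rw [this, hkurt j]
      · rw [if_neg hj]
        have := Emul j l hj (fun x => x ^ 2) (fun x => x ^ 2) (measurable_id.pow_const 2)
          (measurable_id.pow_const 2)
        have heq : (fun ω => (u ω j) ^ 2 * (u ω l * u ω l))
            = fun ω => (u ω j) ^ 2 * (u ω l) ^ 2 := by funext ω; ring
        rw [heq, this, hvar j, hvar l, one_mul]
    · rw [if_neg h]
      by_cases hj : j = l
      · subst hj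
        have heq : (fun ω => (u ω j) ^ 2 * (u ω j * u ω l'))
            = fun ω => (u ω j) ^ 3 * u ω l' := by funext ω; ring
        have := Emul j l' (fun hh => h hh) (fun x => x ^ 3) id (measurable_id.pow_const 3)
          measurable_id
        simp only [id] at this
        rw [heq, this, hmean l', mul_zero]
      · by_cases hj' : j = l'
        · subst hj'
          have heq : (fun ω => (u ω j) ^ 2 * (u ω l * u ω j))
              = fun ω => u ω l * (u ω j) ^ 3 := by funext ω; ring
          have := Emul l j (fun hh => hj hh.symm) id (fun x => x ^ 3) measurable_id
            (measurable_id.pow_const 3)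
          simp only [id] at this
          rw [heq, this, hmean l, zero_mul]
        · -- j, l, l' pairwise distinct
          have hind : IndepFun (fun ω => (u ω j) ^ 2 * u ω l) (fun ω => u ω l') P := by
            have hpair := hindep.indepFun_prodMk hmeas j l l' hj' h
            exact hpair.comp (φ := fun p : ℝ × ℝ => p.1 ^ 2 * p.2) (ψ := id)
              ((measurable_fst.pow_const 2).mul measurable_snd) measurable_id
          have := hind.integral_fun_mul_eq_mul_integral
            (((hmeas j).pow_const 2 |>.mul (hmeas l)).aestronglyMeasurable)
            ((hmeas l').aestronglyMeasurable)
          have heq : (fun ω => (u ω j) ^ 2 * (u ω l * u ω l'))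
              = fun ω => ((u ω j) ^ 2 * u ω l) * u ω l' := by funext ω; ring
          have h2 : ∫ ω, (u ω j ^ 2 * u ω l) * u ω l' ∂P
              = (∫ ω, u ω j ^ 2 * u ω l ∂P) * ∫ ω, u ω l' ∂P := this
          rw [heq, h2, hmean l', mul_zero]
  -- facts about v i
  have hIv : ∀ i, Integrable (v i) P := by
    intro i
    exact integrable_finset_sum _ fun l _ => (hIu l).const_mul _
  have hEv : ∀ i, ∫ ω, v i ω ∂P = 0 := by
    intro i
    rw [hvdef]
    rw [integral_finset_sum _ fun l _ => (hIu l).const_mul _]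
    simp [integral_const_mul, hmean]
  set T : Fin k → ℝ := fun i => ∑ l ∈ S, (C i l) ^ 2 with hTdef
  -- the square expansion of (v i + b i)^2
  have hexp : ∀ i, (fun ω => (v i ω + b i) ^ 2)
      = fun ω => (∑ l ∈ S, ∑ l' ∈ S, (C i l * C i l') * (u ω l * u ω l'))
          + ((2 * b i) * v i ω + (b i) ^ 2) := by
    intro i
    funext ω
    have h1 : (v i ω + b i) ^ 2 = v i ω * v i ω + ((2 * b i) * v i ω + (b i) ^ 2) := by
      ring
    rw [h1, hvdef]
    simp only
    rw [Finset.sum_mul_sum]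
    congr 1
    refine Finset.sum_congr rfl fun l _ => Finset.sum_congr rfl fun l' _ => ?_
    ring
  have hIq : ∀ i, Integrable (fun ω => (v i ω + b i) ^ 2) P := by
    intro i
    rw [hexp i]
    exact ((integrable_finset_sum _ fun l _ => integrable_finset_sum _
      fun l' _ => (hIuu l l').const_mul _).add
      (((hIv i).const_mul _).add (integrable_const _)))
  have hEq1 : ∀ i, ∫ ω, (v i ω + b i) ^ 2 ∂P = T i + (b i) ^ 2 := by
    intro i
    have iA : Integrable (fun ω => ∑ l ∈ S, ∑ l' ∈ S, (C i l * C i l') * (u ω l * u ω l')) P :=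
      integrable_finset_sum _ fun l _ => integrable_finset_sum _
        fun l' _ => (hIuu l l').const_mul _
    have iB : Integrable (fun ω => (2 * b i) * v i ω) P := (hIv i).const_mul _
    have iBc : Integrable (fun ω => (2 * b i) * v i ω + (b i) ^ 2) P :=
      iB.add (integrable_const _)
    rw [hexp i]
    rw [integral_add iA iBc]
    rw [integral_add iB (integrable_const _)]
    rw [integral_finset_sum _ fun l _ => integrable_finset_sum _
      fun l' _ => (hIuu l l').const_mul _]
    have : ∀ l ∈ S, ∫ ω, ∑ l' ∈ S, (C i l * C i l') * (u ω l * u ω l') ∂P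
        = (C i l) ^ 2 := by
      intro l hl
      rw [integral_finset_sum _ fun l' _ => (hIuu l l').const_mul _]
      have : ∀ l' ∈ S, ∫ ω, (C i l * C i l') * (u ω l * u ω l') ∂P
          = if l = l' then (C i l)^2 else 0 := by
        intro l' _
        rw [integral_const_mul, E_uu l l']
        by_cases h : l = l'
        · subst h; simp [sq]
        · simp [h]
      rw [Finset.sum_congr rfl this, Finset.sum_ite_eq S l (fun _ => (C i l)^2),
        if_pos hl]
    rw [Finset.sum_congr rfl this, integral_const_mul, hEv i, integral_const]
    simp [hTdef]
  -- weighted square expectations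
  have hexp2 : ∀ i j, (fun ω => (u ω j) ^ 2 * (v i ω + b i) ^ 2)
      = fun ω => (∑ l ∈ S, ∑ l' ∈ S, (C i l * C i l') * ((u ω j)^2 * (u ω l * u ω l')))
          + ((2 * b i) * (∑ l ∈ S, C i l * ((u ω j)^2 * u ω l)) + (b i) ^ 2 * (u ω j)^2) := by
    intro i j
    funext ω
    have h1 : (u ω j) ^ 2 * (v i ω + b i) ^ 2
        = (u ω j)^2 * (v i ω * v i ω) + ((2 * b i) * ((u ω j)^2 * v i ω)
            + (b i) ^ 2 * (u ω j)^2) := by ring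
    rw [h1, hvdef]
    simp only
    rw [Finset.sum_mul_sum, Finset.mul_sum, Finset.mul_sum]
    congr 1
    · refine Finset.sum_congr rfl fun l _ => ?_
      rw [Finset.mul_sum]
      refine Finset.sum_congr rfl fun l' _ => ?_
      ring
    · congr 1
      congr 1
      refine Finset.sum_congr rfl fun l _ => ?_
      ring
  have hIq2 : ∀ i j, Integrable (fun ω => (u ω j) ^ 2 * (v i ω + b i) ^ 2) P := by
    intro i j
    rw [hexp2 i j]
    exact (integrable_finset_sum _ fun l _ => integrable_finset_sum _
      fun l' _ => (hIsquu j l l').const_mul _).add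
      (((integrable_finset_sum _ fun l _ => (hIsqu j l).const_mul _).const_mul _).add
        ((hIsq j).const_mul _))
  have hEq2 : ∀ i, ∀ j ∈ S, ∫ ω, (u ω j) ^ 2 * (v i ω + b i) ^ 2 ∂P
      = ((kφ - 1) * (C i j) ^ 2 + T i) + (b i) ^ 2 := by
    intro i j hj
    have iA : Integrable
        (fun ω => ∑ l ∈ S, ∑ l' ∈ S, (C i l * C i l') * ((u ω j)^2 * (u ω l * u ω l'))) P :=
      integrable_finset_sum _ fun l _ => integrable_finset_sum _
        fun l' _ => (hIsquu j l l').const_mul _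
    have iB : Integrable (fun ω => (2 * b i) * ∑ l ∈ S, C i l * ((u ω j)^2 * u ω l)) P :=
      (integrable_finset_sum _ fun l _ => (hIsqu j l).const_mul _).const_mul _
    have iC : Integrable (fun ω => (b i) ^ 2 * (u ω j)^2) P := (hIsq j).const_mul _
    have iBC : Integrable (fun ω => (2 * b i) * (∑ l ∈ S, C i l * ((u ω j)^2 * u ω l))
        + (b i) ^ 2 * (u ω j)^2) P := iB.add iC
    rw [hexp2 i j]
    rw [integral_add iA iBC]
    rw [integral_add iB iC]
    rw [integral_finset_sum _ fun l _ => integrable_finset_sum _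
      fun l' _ => (hIsquu j l l').const_mul _]
    have hmain : ∀ l ∈ S, ∫ ω, ∑ l' ∈ S, (C i l * C i l') * ((u ω j)^2 * (u ω l * u ω l')) ∂P
        = (C i l) ^ 2 * (if j = l then kφ else 1) := by
      intro l hl
      rw [integral_finset_sum _ fun l' _ => (hIsquu j l l').const_mul _]
      have : ∀ l' ∈ S, ∫ ω, (C i l * C i l') * ((u ω j)^2 * (u ω l * u ω l')) ∂P
          = if l = l' then (C i l)^2 * (if j = l then kφ else 1) else 0 := by
        intro l' _
        rw [integral_const_mul, E4 j l l']
        by_cases h : l = l'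
        · subst h; simp [sq]
        · simp [h]
      rw [Finset.sum_congr rfl this,
        Finset.sum_ite_eq S l (fun _ => (C i l)^2 * (if j = l then kφ else 1)), if_pos hl]
    rw [Finset.sum_congr rfl hmain]
    have hsum : ∑ l ∈ S, (C i l) ^ 2 * (if j = l then kφ else 1)
        = (kφ - 1) * (C i j) ^ 2 + T i := by
      have : ∀ l ∈ S, (C i l) ^ 2 * (if j = l then kφ else 1)
          = (if j = l then (kφ - 1) * (C i j)^2 else 0) + (C i l)^2 := by
        intro l _
        by_cases h : j = l
        · subst h; simp; ring
        · simp [h]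
      rw [Finset.sum_congr rfl this, Finset.sum_add_distrib,
        Finset.sum_ite_eq S j (fun _ => (kφ - 1) * (C i j)^2), if_pos hj, hTdef]
    rw [hsum]
    have hz : ∫ ω, (2 * b i) * ∑ l ∈ S, C i l * ((u ω j)^2 * u ω l) ∂P = 0 := by
      rw [integral_const_mul, integral_finset_sum _ fun l _ => (hIsqu j l).const_mul _]
      simp [integral_const_mul, E_squ]
    rw [hz]
    rw [integral_const_mul]
    rw [hvar j]
    ring
  -- rewrite the integrand
  have key : ∀ ω, (1 + ∑ j ∈ S, (u ω j) ^ 2) * ∑ i, (C.mulVec (u ω) i + m i - zbar i) ^ 2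
      = ∑ i, ((v i ω + b i) ^ 2 + ∑ j ∈ S, (u ω j) ^ 2 * (v i ω + b i) ^ 2) := by
    intro ω
    have hmv : ∀ i, C.mulVec (u ω) i + m i - zbar i = v i ω + b i := by
      intro i
      have h1 : C.mulVec (u ω) i = v i ω := by
        show (∑ l, C i l * u ω l) = ∑ l ∈ S, C i l * u ω l
        exact (Finset.sum_subset (Finset.subset_univ S)
          (fun x _ hx => by rw [hC i x hx, zero_mul])).symm
      rw [h1]
      show v i ω + m i - zbar i = v i ω + (m i - zbar i)
      ring
    simp only [hmv]
    rw [add_mul, one_mul, Finset.sum_mul]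
    have h2 : ∑ j ∈ S, (u ω j) ^ 2 * ∑ i, (v i ω + b i) ^ 2
        = ∑ i, ∑ j ∈ S, (u ω j) ^ 2 * (v i ω + b i) ^ 2 :=
      (Finset.sum_congr rfl fun j _ => by rw [Finset.mul_sum]).trans Finset.sum_comm
    rw [h2, ← Finset.sum_add_distrib]
  have hIall : ∀ i : Fin k, Integrable
      (fun ω => (v i ω + b i) ^ 2 + ∑ j ∈ S, (u ω j) ^ 2 * (v i ω + b i) ^ 2) P :=
    fun i => (hIq i).add (integrable_finset_sum _ fun j _ => hIq2 i j)
  rw [integral_congr_ae (Filter.Eventually.of_forall key)]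
  rw [integral_finset_sum _ fun i _ => hIall i]
  have hval : ∀ i : Fin k, ∫ ω, ((v i ω + b i) ^ 2
      + ∑ j ∈ S, (u ω j) ^ 2 * (v i ω + b i) ^ 2) ∂P
      = ((S.card : ℝ) + 1) * (b i)^2 + ((S.card : ℝ) + kφ) * T i := by
    intro i
    have iW : Integrable (fun ω => ∑ j ∈ S, (u ω j) ^ 2 * (v i ω + b i) ^ 2) P :=
      integrable_finset_sum _ fun j _ => hIq2 i j
    rw [integral_add (hIq i) iW]
    rw [integral_finset_sum _ fun j _ => hIq2 i j]
    rw [hEq1 i, Finset.sum_congr rfl (hEq2 i)]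
    rw [Finset.sum_add_distrib, Finset.sum_add_distrib, Finset.sum_const,
      Finset.sum_const]
    have : ∑ j ∈ S, (kφ - 1) * (C i j) ^ 2 = (kφ - 1) * T i := by
      rw [hTdef, Finset.mul_sum]
    rw [this]
    simp only [nsmul_eq_mul]
    ring
  rw [Finset.sum_congr rfl fun i _ => hval i]
  apply le_of_eq
  rw [Finset.sum_add_distrib, ← Finset.mul_sum, ← Finset.mul_sum]
  congr 1
  congr 1
  refine Finset.sum_congr rfl fun i _ => ?_
  rw [hTdef]
  exact Finset.sum_subset (Finset.subset_univ S)
    (fun x _ hx => by rw [hC i x hx]; ring)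
end

section
/- Let u = (u_1, ..., u_d) be a random vector with independent, identically distributed, symmetric, standardized components (E u_i = 0, E u_i² = 1, E u_i³ = 0) and finite kurtosis E u_i⁴ = k_φ ≥ 1. Let C, C' ∈ ℝ^{m×d} be matrices whose columns outside an index set S ⊆ {1,...,d} (of size s) are zero, and let m, m' ∈ ℝ^m. Then E[ (1 + Σ_{j∈S} u_j²) ‖(C − C') u + (m − m')‖₂² ] ≤ (s + k_φ) ( ‖m − m'‖₂² + ‖C − C'‖_F² ). -/
open MeasureTheory ProbabilityTheory

section AuxLemmas

variable {Ω : Type*} [MeasurableSpace Ω] {P : Measure Ω} [IsProbabilityMeasure P]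

omit [IsProbabilityMeasure P] in
lemma aux_mul_mem2 {f g : Ω → ℝ} (hf : MemLp f 4 P) (hg : MemLp g 4 P) :
    MemLp (fun ω => f ω * g ω) 2 P := by
  have h := hg.smul (φ := f) hf (p := 4) (q := 4) (r := 2) (hpqr := ⟨by
    rw [← two_mul, show (4 : ENNReal) = 2 * 2 by norm_num,
      ENNReal.mul_inv (Or.inl (by norm_num)) (Or.inl (by norm_num)), ← mul_assoc,
      ENNReal.mul_inv_cancel (by norm_num) (by norm_num), one_mul]⟩)
  exact h

omit [IsProbabilityMeasure P] in
lemma aux_mul_int {f g : Ω → ℝ} (hf : MemLp f 2 P) (hg : MemLp g 2 P) :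
    Integrable (fun ω => f ω * g ω) P := by
  have h := hg.smul (φ := f) hf (p := 2) (q := 2) (r := 1)
  rw [← memLp_one_iff_integrable]
  exact h

lemma aux_affine_mem4 {d : ℕ} (u : Ω → Fin d → ℝ) (hL4 : ∀ i, MemLp (fun ω => u ω i) 4 P)
    (c : Fin d → ℝ) (w : ℝ) (t : Finset (Fin d)) :
    MemLp (fun ω => ∑ j ∈ t, c j * u ω j + w) 4 P := by
  have h := (memLp_finset_sum' t (fun j (_ : j ∈ t) => (hL4 j).const_mul (c j))).add
    (memLp_const (p := 4) (μ := P) w)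
  convert h using 1
  ext ω
  simp [Finset.sum_apply]

lemma aux_affine_mean {d : ℕ} (u : Ω → Fin d → ℝ) (hL4 : ∀ i, MemLp (fun ω => u ω i) 4 P)
    (hmean : ∀ i, ∫ ω, u ω i ∂P = 0)
    (c : Fin d → ℝ) (w : ℝ) (t : Finset (Fin d)) :
    ∫ ω, (∑ j ∈ t, c j * u ω j + w) ∂P = w := by
  have hL1 : ∀ i, Integrable (fun ω => u ω i) P :=
    fun i => memLp_one_iff_integrable.mp ((hL4 i).mono_exponent (by norm_num))
  rw [integral_add (integrable_finset_sum _ fun j _ => (hL1 j).const_mul _) (integrable_const _),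
    integral_finset_sum _ (fun j _ => (hL1 j).const_mul _), integral_const]
  simp only [measure_univ, probReal_univ, ENNReal.toReal_one, smul_eq_mul, one_mul]
  have : ∀ j ∈ t, ∫ ω, c j * u ω j ∂P = 0 := by
    intro j _
    rw [integral_const_mul, hmean j, mul_zero]
  rw [Finset.sum_congr rfl this, Finset.sum_const_zero, zero_add]

lemma aux_indep_erase {d : ℕ} (u : Ω → Fin d → ℝ) (hmeas : ∀ i, Measurable fun ω => u ω i)
    (hindep : iIndepFun (fun i ω => u ω i) P)
    (p : Fin d) (c : Fin d → ℝ) (w : ℝ) :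
    IndepFun (fun ω => u ω p)
      (fun ω => ∑ j ∈ Finset.univ.erase p, c j * u ω j + w) P := by
  classical
  have hdisj : Disjoint ({p} : Finset (Fin d)) (Finset.univ.erase p) :=
    Finset.disjoint_singleton_left.mpr (Finset.notMem_erase p _)
  have base := hindep.indepFun_finset {p} (Finset.univ.erase p) hdisj hmeas
  have hφ : Measurable (fun x : (({p} : Finset (Fin d)) → ℝ) =>
      x ⟨p, Finset.mem_singleton_self p⟩) := measurable_pi_apply _
  have hψ : Measurable (fun x : (↥(Finset.univ.erase p) → ℝ) =>
      (∑ j : ↥(Finset.univ.erase p), c j * x j) + w) := by fun_prop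
  have h := base.comp hφ hψ
  convert h using 1
  · rfl
  ext ω
  show _ = (∑ j : ↥(Finset.univ.erase p), c j * u ω j) + w
  rw [← Finset.sum_coe_sort (Finset.univ.erase p) (fun j => c j * u ω j)]

lemma aux_sum_sq {d : ℕ} (u : Ω → Fin d → ℝ)
    (hmeas : ∀ i, Measurable fun ω => u ω i)
    (hindep : iIndepFun (fun i ω => u ω i) P)
    (hL4 : ∀ i, MemLp (fun ω => u ω i) 4 P)
    (hmean : ∀ i, ∫ ω, u ω i ∂P = 0)
    (hvar : ∀ i, ∫ ω, (u ω i) ^ 2 ∂P = 1)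
    (t : Finset (Fin d)) (c : Fin d → ℝ) (w : ℝ) :
    ∫ ω, (∑ j ∈ t, c j * u ω j + w)^2 ∂P = (∑ j ∈ t, (c j)^2) + w^2 := by
  classical
  have hL2 : ∀ i, MemLp (fun ω => u ω i) 2 P :=
    fun i => (hL4 i).mono_exponent (by norm_num)
  have hL1 : ∀ i, Integrable (fun ω => u ω i) P :=
    fun i => memLp_one_iff_integrable.mp ((hL4 i).mono_exponent (by norm_num))
  have int_mul : ∀ j l, Integrable (fun ω => u ω j * u ω l) P :=
    fun j l => aux_mul_int (hL2 j) (hL2 l)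
  have mom2 : ∀ j l : Fin d, ∫ ω, u ω j * u ω l ∂P = if j = l then 1 else 0 := by
    intro j l
    by_cases h : j = l
    · subst h
      rw [if_pos rfl, ← hvar j]
      simp_rw [← sq]
    · rw [if_neg h,
        (hindep.indepFun h).integral_fun_mul_eq_mul_integral (hmeas j).aestronglyMeasurable
          (hmeas l).aestronglyMeasurable,
        hmean j, zero_mul]
  have expand : ∀ ω, (∑ j ∈ t, c j * u ω j + w)^2
      = (∑ j ∈ t, ∑ l ∈ t, (c j * c l) * (u ω j * u ω l))
        + ((∑ j ∈ t, (2 * w * c j) * u ω j) + w^2) := by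
    intro ω
    have h1 : (∑ j ∈ t, c j * u ω j)^2
        = ∑ j ∈ t, ∑ l ∈ t, (c j * c l) * (u ω j * u ω l) := by
      rw [sq, Finset.sum_mul_sum]
      exact Finset.sum_congr rfl fun j _ => Finset.sum_congr rfl fun l _ => by ring
    rw [add_sq, h1, show 2 * (∑ j ∈ t, c j * u ω j) * w = ∑ j ∈ t, (2 * w * c j) * u ω j by
      rw [Finset.mul_sum, Finset.sum_mul]; exact Finset.sum_congr rfl fun j _ => by ring]
    ring
  have i1 : Integrable (fun ω => ∑ j ∈ t, ∑ l ∈ t, (c j * c l) * (u ω j * u ω l)) P :=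
    integrable_finset_sum _ fun j _ =>
      integrable_finset_sum _ fun l _ => (int_mul j l).const_mul _
  have i2 : Integrable (fun ω => (∑ j ∈ t, (2 * w * c j) * u ω j) + w^2) P :=
    (integrable_finset_sum _ fun j _ => (hL1 j).const_mul _).add (integrable_const _)
  calc ∫ ω, (∑ j ∈ t, c j * u ω j + w)^2 ∂P
      = ∫ ω, ((∑ j ∈ t, ∑ l ∈ t, (c j * c l) * (u ω j * u ω l))
          + ((∑ j ∈ t, (2 * w * c j) * u ω j) + w^2)) ∂P :=
        integral_congr_ae (Filter.Eventually.of_forall fun ω => expand ω)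
    _ = (∑ j ∈ t, ∑ l ∈ t, (c j * c l) * ∫ ω, u ω j * u ω l ∂P)
          + ((∑ j ∈ t, (2 * w * c j) * ∫ ω, u ω j ∂P) + w^2) := by
        rw [integral_add i1 i2,
          integral_finset_sum _ (fun j _ =>
            integrable_finset_sum _ fun l _ => (int_mul j l).const_mul _),
          integral_add (integrable_finset_sum _ fun j _ => (hL1 j).const_mul _)
            (integrable_const _),
          integral_finset_sum _ (fun j _ => (hL1 j).const_mul _), integral_const]
        simp only [measure_univ, probReal_univ, ENNReal.toReal_one, smul_eq_mul, one_mul]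
        congr 1
        · refine Finset.sum_congr rfl fun j _ => ?_
          rw [integral_finset_sum _ (fun l _ => (int_mul j l).const_mul _)]
          exact Finset.sum_congr rfl fun l _ => integral_const_mul _ _
        · congr 1
          exact Finset.sum_congr rfl fun j _ => integral_const_mul _ _
    _ = (∑ j ∈ t, (c j)^2) + w^2 := by
        simp only [mom2]
        simp only [hmean, mul_zero, Finset.sum_const_zero, zero_add]
        congr 1
        refine Finset.sum_congr rfl fun j hj => ?_
        rw [Finset.sum_eq_single j
          (fun l _ hlj => by rw [if_neg (fun h : j = l => hlj h.symm), mul_zero])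
          (fun h => absurd hj h)]
        rw [if_pos rfl]; ring

end AuxLemmas

/-- Let `u` be a random vector in `ℝ^d` with i.i.d., symmetric, standardized
components (`E uᵢ = 0`, `E uᵢ² = 1`, `E uᵢ³ = 0`) and finite kurtosis `E uᵢ⁴ = kφ ≥ 1`. Let
`C, C' ∈ ℝ^{k×d}` have their columns outside `S` (of size `s`) equal to zero, and `m, m' ∈ ℝ^k`.
Then `E[(1 + ∑_{j∈S} uⱼ²) ‖(C − C')u + (m − m')‖₂²] ≤ (s + kφ)(‖m − m'‖₂² + ‖C − C'‖_F²)`. -/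
theorem weighted_second_moment_parameter_difference_le
    {Ω : Type*} [MeasurableSpace Ω] (P : Measure Ω) [IsProbabilityMeasure P]
    {d k : ℕ} (u : Ω → Fin d → ℝ)
    (hmeas : ∀ i, Measurable fun ω => u ω i)
    (hindep : iIndepFun (fun i ω => u ω i) P)
    (hident : ∀ i j, IdentDistrib (fun ω => u ω i) (fun ω => u ω j) P P)
    (hsymm : ∀ i, IdentDistrib (fun ω => u ω i) (fun ω => -u ω i) P P)
    (hL4 : ∀ i, MemLp (fun ω => u ω i) 4 P)
    (hmean : ∀ i, ∫ ω, u ω i ∂P = 0)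
    (hvar : ∀ i, ∫ ω, (u ω i) ^ 2 ∂P = 1)
    (hthird : ∀ i, ∫ ω, (u ω i) ^ 3 ∂P = 0)
    (kφ : ℝ) (hkurt : ∀ i, ∫ ω, (u ω i) ^ 4 ∂P = kφ) (hkφ : 1 ≤ kφ)
    (S : Finset (Fin d))
    (C C' : Matrix (Fin k) (Fin d) ℝ)
    (hC : ∀ i j, j ∉ S → C i j = 0) (hC' : ∀ i j, j ∉ S → C' i j = 0)
    (m m' : Fin k → ℝ) :
    ∫ ω, (1 + ∑ j ∈ S, (u ω j) ^ 2) * ∑ i, ((C - C').mulVec (u ω) i + (m i - m' i)) ^ 2 ∂P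
      ≤ ((S.card : ℝ) + kφ)
          * ((∑ i, (m i - m' i) ^ 2) + ∑ i, ∑ j, (C i j - C' i j) ^ 2) := by
  classical
  have hL2 : ∀ i, MemLp (fun ω => u ω i) 2 P :=
    fun i => (hL4 i).mono_exponent (by norm_num)
  -- abbreviations (as plain functions, definitionally transparent)
  set D : Fin k → Fin d → ℝ := fun i j => C i j - C' i j with hD
  set v : Fin k → ℝ := fun i => m i - m' i with hv
  set X : Fin k → Ω → ℝ := fun i ω => ∑ j, D i j * u ω j + v i with hX
  set Ti : Fin k → ℝ := fun i => ∑ j, (D i j)^2 with hTi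
  -- X i ∈ L⁴, L²
  have hXL4 : ∀ i, MemLp (X i) 4 P := fun i => aux_affine_mem4 u hL4 (D i) (v i) Finset.univ
  have hXL2 : ∀ i, MemLp (X i) 2 P := fun i => (hXL4 i).mono_exponent (by norm_num)
  -- pointwise identity for the integrand
  have hmv : ∀ ω i, (C - C').mulVec (u ω) i + (m i - m' i) = X i ω := by
    intro ω i
    simp only [hX, hD, hv, Matrix.mulVec, dotProduct, Matrix.sub_apply]
  have hpt : ∀ ω, (1 + ∑ j ∈ S, (u ω j) ^ 2)
        * ∑ i, ((C - C').mulVec (u ω) i + (m i - m' i)) ^ 2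
      = (∑ i, X i ω ^ 2) + ∑ p ∈ S, ∑ i, u ω p ^ 2 * X i ω ^ 2 := by
    intro ω
    have h1 : ∀ i ∈ (Finset.univ : Finset (Fin k)),
        ((C - C').mulVec (u ω) i + (m i - m' i)) ^ 2 = X i ω ^ 2 :=
      fun i _ => by rw [hmv ω i]
    rw [Finset.sum_congr rfl h1, add_mul, one_mul, Finset.sum_mul]
    congr 1
    exact Finset.sum_congr rfl fun p _ => by rw [Finset.mul_sum]
  -- integrability
  have hXsq_int : ∀ i, Integrable (fun ω => X i ω ^ 2) P := fun i => (hXL2 i).integrable_sq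
  have hpX_int : ∀ p i, Integrable (fun ω => u ω p ^ 2 * X i ω ^ 2) P := by
    intro p i
    have h := (aux_mul_mem2 (hL4 p) (hXL4 i)).integrable_sq
    exact h.congr (Filter.Eventually.of_forall fun ω => by ring)
  -- values of ∫ X i ²
  have hX2val : ∀ i, ∫ ω, X i ω ^ 2 ∂P = Ti i + v i ^ 2 := fun i =>
    aux_sum_sq u hmeas hindep hL4 hmean hvar Finset.univ (D i) (v i)
  -- key mixed moment
  have hKey : ∀ (p : Fin d) (i : Fin k), ∫ ω, u ω p ^ 2 * X i ω ^ 2 ∂P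
      = kφ * (D i p) ^ 2 + ((Ti i - (D i p) ^ 2) + v i ^ 2) := by
    intro p i
    set Y : Ω → ℝ := fun ω => ∑ j ∈ Finset.univ.erase p, D i j * u ω j + v i with hY
    have hYmeas : Measurable Y :=
      (Finset.measurable_sum _ (fun j _ => (hmeas j).const_mul (D i j))).add_const (v i)
    have hYL4 : MemLp Y 4 P := aux_affine_mem4 u hL4 (D i) (v i) (Finset.univ.erase p)
    have hYL2 : MemLp Y 2 P := hYL4.mono_exponent (by norm_num)
    have hYint : Integrable Y P :=
      memLp_one_iff_integrable.mp (hYL4.mono_exponent (by norm_num))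
    have hEY : ∫ ω, Y ω ∂P = v i :=
      aux_affine_mean u hL4 hmean (D i) (v i) (Finset.univ.erase p)
    have hEY2 : ∫ ω, Y ω ^ 2 ∂P = (∑ j ∈ Finset.univ.erase p, (D i j)^2) + v i ^ 2 :=
      aux_sum_sq u hmeas hindep hL4 hmean hvar (Finset.univ.erase p) (D i) (v i)
    have hIndepY : IndepFun (fun ω => u ω p) Y P :=
      aux_indep_erase u hmeas hindep p (D i) (v i)
    have hXPY : ∀ ω, X i ω = D i p * u ω p + Y ω := by
      intro ω
      show (∑ j, D i j * u ω j) + v i = _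
      rw [← Finset.add_sum_erase Finset.univ (fun j => D i j * u ω j) (Finset.mem_univ p)]
      show D i p * u ω p + (∑ j ∈ Finset.univ.erase p, D i j * u ω j) + v i = _
      rw [hY]; ring
    have hsplit : ∀ ω, u ω p ^ 2 * X i ω ^ 2
        = (D i p) ^ 2 * u ω p ^ 4
          + ((2 * D i p) * (u ω p ^ 3 * Y ω) + u ω p ^ 2 * Y ω ^ 2) := by
      intro ω; rw [hXPY ω]; ring
    -- integrability pieces
    have hu4int : Integrable (fun ω => u ω p ^ 4) P := by
      have h := (aux_mul_mem2 (hL4 p) (hL4 p)).integrable_sq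
      exact h.congr (Filter.Eventually.of_forall fun ω => by ring)
    have hu3int : Integrable (fun ω => u ω p ^ 3) P := by
      have h := aux_mul_int (aux_mul_mem2 (hL4 p) (hL4 p)) (hL2 p)
      exact h.congr (Filter.Eventually.of_forall fun ω => by ring)
    have hu2int : Integrable (fun ω => u ω p ^ 2) P := (hL2 p).integrable_sq
    have hI3 : IndepFun (fun ω => u ω p ^ 3) Y P := by
      have h := hIndepY.comp (φ := fun x : ℝ => x ^ 3) (ψ := id)
        (measurable_id.pow_const 3) measurable_id
      exact h
    have hI2 : IndepFun (fun ω => u ω p ^ 2) (fun ω => Y ω ^ 2) P := by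
      have h := hIndepY.comp (φ := fun x : ℝ => x ^ 2) (ψ := fun x : ℝ => x ^ 2)
        (measurable_id.pow_const 2) (measurable_id.pow_const 2)
      exact h
    have iA : Integrable (fun ω => (D i p) ^ 2 * u ω p ^ 4) P := hu4int.const_mul _
    have i3Y : Integrable (fun ω => u ω p ^ 3 * Y ω) P := by
      have h := hI3.integrable_mul hu3int hYint
      exact h.congr (Filter.Eventually.of_forall fun ω => rfl)
    have iB : Integrable (fun ω => (2 * D i p) * (u ω p ^ 3 * Y ω)) P := i3Y.const_mul _
    have iC : Integrable (fun ω => u ω p ^ 2 * Y ω ^ 2) P := by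
      have h := hI2.integrable_mul hu2int (hYL2.integrable_sq)
      exact h.congr (Filter.Eventually.of_forall fun ω => rfl)
    have hEB : ∫ ω, u ω p ^ 3 * Y ω ∂P = 0 := by
      have h := hI3.integral_fun_mul_eq_mul_integral ((hmeas p).pow_const 3).aestronglyMeasurable
        hYmeas.aestronglyMeasurable
      rw [h, hthird p, zero_mul]
    have hEC : ∫ ω, u ω p ^ 2 * Y ω ^ 2 ∂P
        = (∑ j ∈ Finset.univ.erase p, (D i j)^2) + v i ^ 2 := by
      have h := hI2.integral_fun_mul_eq_mul_integral ((hmeas p).pow_const 2).aestronglyMeasurable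
        (hYmeas.pow_const 2).aestronglyMeasurable
      rw [h, hvar p, hEY2, one_mul]
    have herase : ∑ j ∈ Finset.univ.erase p, (D i j)^2 = Ti i - (D i p)^2 := by
      rw [hTi, Finset.sum_erase_eq_sub (Finset.mem_univ p)]
    calc ∫ ω, u ω p ^ 2 * X i ω ^ 2 ∂P
        = ∫ ω, ((D i p) ^ 2 * u ω p ^ 4
            + ((2 * D i p) * (u ω p ^ 3 * Y ω) + u ω p ^ 2 * Y ω ^ 2)) ∂P :=
          integral_congr_ae (Filter.Eventually.of_forall fun ω => hsplit ω)
      _ = (D i p) ^ 2 * ∫ ω, u ω p ^ 4 ∂P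
            + ((2 * D i p) * ∫ ω, u ω p ^ 3 * Y ω ∂P + ∫ ω, u ω p ^ 2 * Y ω ^ 2 ∂P) := by
          have iBC : Integrable
              (fun ω => (2 * D i p) * (u ω p ^ 3 * Y ω) + u ω p ^ 2 * Y ω ^ 2) P := iB.add iC
          rw [integral_add iA iBC, integral_add iB iC,
            integral_const_mul, integral_const_mul]
      _ = kφ * (D i p) ^ 2 + ((Ti i - (D i p) ^ 2) + v i ^ 2) := by
          rw [hkurt p, hEB, hEC, herase]; ring
  -- put everything together
  have hTnn : ∀ i, 0 ≤ Ti i := fun i => Finset.sum_nonneg fun j _ => sq_nonneg _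
  have hsumP : ∀ i, (∑ p ∈ S, (kφ * (D i p) ^ 2 + ((Ti i - (D i p) ^ 2) + v i ^ 2)))
      = (S.card : ℝ) * (Ti i + v i ^ 2) + (kφ - 1) * Ti i := by
    intro i
    have hTS : ∑ p ∈ S, (D i p)^2 = Ti i := by
      rw [hTi]
      refine Finset.sum_subset (Finset.subset_univ S) (fun j _ hj => ?_)
      rw [hD]
      simp only
      rw [hC i j hj, hC' i j hj]; norm_num
    rw [Finset.sum_add_distrib, ← Finset.mul_sum, hTS, Finset.sum_add_distrib,
      Finset.sum_sub_distrib, Finset.sum_const, Finset.sum_const, hTS]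
    simp only [nsmul_eq_mul]
    ring
  calc ∫ ω, (1 + ∑ j ∈ S, (u ω j) ^ 2)
          * ∑ i, ((C - C').mulVec (u ω) i + (m i - m' i)) ^ 2 ∂P
      = ∫ ω, ((∑ i, X i ω ^ 2) + ∑ p ∈ S, ∑ i, u ω p ^ 2 * X i ω ^ 2) ∂P :=
        integral_congr_ae (Filter.Eventually.of_forall fun ω => hpt ω)
    _ = (∑ i, ∫ ω, X i ω ^ 2 ∂P) + ∑ p ∈ S, ∑ i, ∫ ω, u ω p ^ 2 * X i ω ^ 2 ∂P := by
        rw [integral_add (integrable_finset_sum _ fun i _ => hXsq_int i)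
          (integrable_finset_sum _ fun p _ => integrable_finset_sum _ fun i _ => hpX_int p i),
          integral_finset_sum _ (fun i _ => hXsq_int i),
          integral_finset_sum _ (fun p _ => integrable_finset_sum _ fun i _ => hpX_int p i)]
        congr 1
        exact Finset.sum_congr rfl fun p _ =>
          integral_finset_sum _ (fun i _ => hpX_int p i)
    _ = ∑ i, ((Ti i + v i ^ 2)
          + ((S.card : ℝ) * (Ti i + v i ^ 2) + (kφ - 1) * Ti i)) := by
        rw [Finset.sum_comm (s := S), ← Finset.sum_add_distrib]
        refine Finset.sum_congr rfl fun i _ => ?_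
        rw [hX2val i, Finset.sum_congr rfl (fun p (_ : p ∈ S) => hKey p i), hsumP i]
    _ ≤ ∑ i, ((S.card : ℝ) + kφ) * (v i ^ 2 + Ti i) := by
        refine Finset.sum_le_sum fun i _ => ?_
        nlinarith [sq_nonneg (v i), hTnn i, hkφ, Nat.cast_nonneg (α := ℝ) S.card]
    _ = ((S.card : ℝ) + kφ) * ((∑ i, (m i - m' i) ^ 2) + ∑ i, ∑ j, (C i j - C' i j) ^ 2) := by
        rw [← Finset.mul_sum, Finset.sum_add_distrib]
end

section
/- Let ℓ : ℝ^d → ℝ be μ-strongly convex and differentiable, let u be a random vector in ℝ^d with independent, identically distributed, symmetric, standardized components (E u_i = 0, E u_i² = 1, E u_i³ = 0), and define the energy f(λ) = E ℓ(C u + m) for λ = (m, C) ∈ ℝ^d × ℝ^{d×d} (assumed finite and differentiable). Then for all λ = (m, C) and λ' = (m', C'), the squared parameter distance ‖λ − λ'‖₂² := ‖m − m'‖₂² + ‖C − C'‖_F² satisfies ‖λ − λ'‖₂² ≤ (2/μ) D_f(λ, λ'), where D_f(λ, λ') = f(λ) − f(λ') − ⟨∇f(λ'), λ − λ'⟩ is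 the Bregman divergence generated by f. -/
open MeasureTheory ProbabilityTheory Filter
open scoped RealInnerProductSpace Topology

/-- The full location-scale reparameterization `T_λ(u) = C u + m`, where the parameter
`λ = (m, C)` is identified with an element of the Euclidean space indexed by
`Fin d ⊕ Fin d × Fin d` (locations via `Sum.inl`, scale-matrix entries via `Sum.inr`); note
that the Euclidean norm of this space is exactly `‖λ‖² = ‖m‖₂² + ‖C‖_F²`. -/
noncomputable def fullReparam (d : ℕ)
    (lam : EuclideanSpace ℝ ((Fin d) ⊕ (Fin d × Fin d))) (uu : Fin d → ℝ) :
    EuclideanSpace ℝ (Fin d) :=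
  WithLp.toLp 2 (fun i => (∑ j, lam (Sum.inr (i, j)) * uu j) + lam (Sum.inl i))

section helpers

set_option linter.unusedSectionVars false

variable {Ω : Type*} [MeasurableSpace Ω] {P : Measure Ω} [IsProbabilityMeasure P]
  {d : ℕ} {u : Ω → Fin d → ℝ}

private lemma mul_int' (hmeas : ∀ i, Measurable fun ω => u ω i)
    (hL2 : ∀ i, MemLp (fun ω => u ω i) 2 P)
    (j k : Fin d) : Integrable (fun ω => u ω j * u ω k) P := by
  refine Integrable.mono' (((hL2 j).integrable_sq).add ((hL2 k).integrable_sq))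
    (((hmeas j).aestronglyMeasurable).mul ((hmeas k).aestronglyMeasurable)) ?_
  filter_upwards with ω
  simp only [Real.norm_eq_abs, Pi.add_apply]
  rcases abs_cases (u ω j * u ω k) with ⟨h, _⟩ | ⟨h, _⟩ <;> rw [h] <;>
    nlinarith [sq_nonneg (u ω j - u ω k), sq_nonneg (u ω j + u ω k)]

private lemma mul_moment' (hmeas : ∀ i, Measurable fun ω => u ω i)
    (hindep : iIndepFun (fun i ω => u ω i) P)
    (hmean : ∀ i, ∫ ω, u ω i ∂P = 0) (hvar : ∀ i, ∫ ω, (u ω i) ^ 2 ∂P = 1)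
    (j k : Fin d) : ∫ ω, u ω j * u ω k ∂P = if j = k then 1 else 0 := by
  by_cases h : j = k
  · subst h
    simp only [if_pos rfl, ← sq]
    exact hvar j
  · rw [if_neg h]
    have hind : IndepFun (fun ω => u ω j) (fun ω => u ω k) P := hindep.indepFun h
    have := hind.integral_mul_eq_mul_integral ((hmeas j).aestronglyMeasurable) ((hmeas k).aestronglyMeasurable)
    simpa [hmean] using this

private lemma row_expand' (a : Fin d → ℝ) (b : ℝ) (ω : Ω) :
    (∑ j, a j * u ω j + b) ^ 2 =
      (∑ j, ∑ k, (a j * a k) * (u ω j * u ω k)) + ((∑ j, (2 * b * a j) * u ω j) + b ^ 2) := by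
  rw [add_sq, sq, Finset.sum_mul_sum]
  have h1 : ∀ j ∈ Finset.univ, ∑ k, a j * u ω j * (a k * u ω k)
      = ∑ k, (a j * a k) * (u ω j * u ω k) := by
    intro j _
    exact Finset.sum_congr rfl fun k _ => by ring
  rw [Finset.sum_congr rfl h1]
  have h2 : (2 * ∑ j, a j * u ω j) * b = ∑ j, (2 * b * a j) * u ω j := by
    rw [Finset.mul_sum, Finset.sum_mul]
    exact Finset.sum_congr rfl fun j _ => by ring
  rw [h2]
  ring

private lemma row_integrable' (hmeas : ∀ i, Measurable fun ω => u ω i)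
    (hL2 : ∀ i, MemLp (fun ω => u ω i) 2 P) (a : Fin d → ℝ) (b : ℝ) :
    Integrable (fun ω => (∑ j, a j * u ω j + b) ^ 2) P := by
  have : (fun ω => (∑ j, a j * u ω j + b) ^ 2) = fun ω =>
      (∑ j, ∑ k, (a j * a k) * (u ω j * u ω k)) + ((∑ j, (2 * b * a j) * u ω j) + b ^ 2) :=
    funext (row_expand' a b)
  rw [this]
  refine Integrable.add ?_ (Integrable.add ?_ (integrable_const _))
  · exact integrable_finset_sum _ fun j _ => integrable_finset_sum _ fun k _ =>
      (mul_int' hmeas hL2 j k).const_mul _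
  · exact integrable_finset_sum _ fun j _ => ((hL2 j).integrable one_le_two).const_mul _

private lemma row_integral' (hmeas : ∀ i, Measurable fun ω => u ω i)
    (hindep : iIndepFun (fun i ω => u ω i) P)
    (hL2 : ∀ i, MemLp (fun ω => u ω i) 2 P)
    (hmean : ∀ i, ∫ ω, u ω i ∂P = 0) (hvar : ∀ i, ∫ ω, (u ω i) ^ 2 ∂P = 1)
    (a : Fin d → ℝ) (b : ℝ) :
    ∫ ω, (∑ j, a j * u ω j + b) ^ 2 ∂P = (∑ j, (a j) ^ 2) + b ^ 2 := by
  have hrw : (fun ω => (∑ j, a j * u ω j + b) ^ 2) = fun ω =>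
      (∑ j, ∑ k, (a j * a k) * (u ω j * u ω k)) + ((∑ j, (2 * b * a j) * u ω j) + b ^ 2) :=
    funext (row_expand' a b)
  have hint1 : Integrable (fun ω => ∑ j, ∑ k, (a j * a k) * (u ω j * u ω k)) P :=
    integrable_finset_sum _ fun j _ => integrable_finset_sum _ fun k _ =>
      (mul_int' hmeas hL2 j k).const_mul _
  have hint2 : Integrable (fun ω => ∑ j, (2 * b * a j) * u ω j) P :=
    integrable_finset_sum _ fun j _ => ((hL2 j).integrable one_le_two).const_mul _
  have hint3 : Integrable (fun ω => (∑ j, (2 * b * a j) * u ω j) + b ^ 2) P :=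
    hint2.add (integrable_const _)
  rw [hrw, integral_add hint1 hint3, integral_add hint2 (integrable_const _)]
  have e1 : ∫ ω, ∑ j, ∑ k, (a j * a k) * (u ω j * u ω k) ∂P = ∑ j, (a j) ^ 2 := by
    rw [integral_finset_sum _ fun j _ => integrable_finset_sum _ fun k _ =>
      (mul_int' hmeas hL2 j k).const_mul _]
    have : ∀ j ∈ Finset.univ, ∫ ω, ∑ k, (a j * a k) * (u ω j * u ω k) ∂P = (a j) ^ 2 := by
      intro j _
      rw [integral_finset_sum _ fun k _ => (mul_int' hmeas hL2 j k).const_mul _]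
      have : ∀ k ∈ Finset.univ, ∫ ω, (a j * a k) * (u ω j * u ω k) ∂P
          = (a j * a k) * (if j = k then 1 else 0) := by
        intro k _
        rw [integral_const_mul, mul_moment' hmeas hindep hmean hvar]
      rw [Finset.sum_congr rfl this]
      simp [mul_ite, Finset.sum_ite_eq, sq]
    rw [Finset.sum_congr rfl this]
  have e2 : ∫ ω, ∑ j, (2 * b * a j) * u ω j ∂P = 0 := by
    rw [integral_finset_sum _ fun j _ => ((hL2 j).integrable one_le_two).const_mul _]
    simp [integral_const_mul, hmean]
  rw [e1, e2]
  simp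

end helpers

private lemma euc_norm_sq' {ι : Type*} [Fintype ι] (x : EuclideanSpace ℝ ι) :
    ‖x‖ ^ 2 = ∑ i, (x i) ^ 2 := by
  rw [EuclideanSpace.norm_eq, Real.sq_sqrt (by positivity)]
  simp [Real.norm_eq_abs, sq_abs]

private lemma reparam_sub' (d : ℕ) (x y : EuclideanSpace ℝ ((Fin d) ⊕ (Fin d × Fin d)))
    (uu : Fin d → ℝ) :
    fullReparam d x uu - fullReparam d y uu = fullReparam d (x - y) uu := by
  ext i
  simp only [PiLp.sub_apply, fullReparam, PiLp.toLp_apply, Finset.sum_sub_distrib, sub_mul]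
  ring

private lemma reparam_combo' (d : ℕ) (a b : ℝ)
    (x y : EuclideanSpace ℝ ((Fin d) ⊕ (Fin d × Fin d))) (uu : Fin d → ℝ) :
    fullReparam d (a • x + b • y) uu = a • fullReparam d x uu + b • fullReparam d y uu := by
  ext i
  simp only [PiLp.add_apply, PiLp.smul_apply, fullReparam, PiLp.toLp_apply, smul_eq_mul, Finset.mul_sum,
    Finset.sum_add_distrib, add_mul, mul_add, mul_assoc]
  ring

private lemma norm_sq_reparam' (d : ℕ) (w : EuclideanSpace ℝ ((Fin d) ⊕ (Fin d × Fin d)))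
    (uu : Fin d → ℝ) :
    ‖fullReparam d w uu‖ ^ 2 = ∑ i, (∑ j, w (Sum.inr (i, j)) * uu j + w (Sum.inl i)) ^ 2 := by
  rw [euc_norm_sq']
  rfl

private lemma euc_norm_sq_sum' (d : ℕ) (w : EuclideanSpace ℝ ((Fin d) ⊕ (Fin d × Fin d))) :
    ‖w‖ ^ 2 = ∑ i, ((∑ j, (w (Sum.inr (i, j))) ^ 2) + (w (Sum.inl i)) ^ 2) := by
  rw [euc_norm_sq', Fintype.sum_sum_type, Fintype.sum_prod_type, Finset.sum_add_distrib]
  ring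

section innerhelpers

variable {E : Type*} [NormedAddCommGroup E] [InnerProductSpace ℝ E]

private lemma strong_combo' (μ : ℝ) (ℓ : E → ℝ) (gradℓ : E → E)
    (hsc : ∀ x y, μ / 2 * ‖y - x‖ ^ 2 ≤ ℓ y - ℓ x - ⟪gradℓ x, y - x⟫)
    (X Y : E) {a b : ℝ} (ha : 0 ≤ a) (hb : 0 ≤ b) (hab : a + b = 1) :
    ℓ (a • X + b • Y) ≤ a * ℓ X + b * ℓ Y - μ / 2 * (a * b) * ‖X - Y‖ ^ 2 := by
  set Z := a • X + b • Y with hZ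
  have ha' : a = 1 - b := by linarith
  have hXZ : X - Z = b • (X - Y) := by rw [hZ, ha']; module
  have hYZ : Y - Z = (-a) • (X - Y) := by rw [hZ, ha']; module
  have h1 := hsc Z X
  have h2 := hsc Z Y
  rw [hXZ] at h1
  rw [hYZ] at h2
  rw [norm_smul, real_inner_smul_right] at h1 h2
  rw [mul_pow, Real.norm_eq_abs, sq_abs] at h1 h2
  have key : a * b ^ 2 + b * a ^ 2 = a * b := by linear_combination a * b * hab
  have e1 : a * (μ / 2 * (b ^ 2 * ‖X - Y‖ ^ 2)) + b * (μ / 2 * ((-a) ^ 2 * ‖X - Y‖ ^ 2))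
      = μ / 2 * (a * b) * ‖X - Y‖ ^ 2 := by
    linear_combination (μ / 2 * ‖X - Y‖ ^ 2) * key
  have e2 : a * (ℓ X - ℓ Z - b * ⟪gradℓ Z, X - Y⟫) + b * (ℓ Y - ℓ Z - (-a) * ⟪gradℓ Z, X - Y⟫)
      = a * ℓ X + b * ℓ Y - ℓ Z := by
    linear_combination (-(ℓ Z)) * hab
  linarith [mul_le_mul_of_nonneg_left h1 ha, mul_le_mul_of_nonneg_left h2 hb]

private lemma norm_combo' (x y : E) {a b : ℝ} (hab : a + b = 1) :
    ‖a • x + b • y‖ ^ 2 = a * ‖x‖ ^ 2 + b * ‖y‖ ^ 2 - a * b * ‖x - y‖ ^ 2 := by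
  have h1 : ‖a • x + b • y‖ ^ 2 = ⟪a • x + b • y, a • x + b • y⟫ :=
    (real_inner_self_eq_norm_sq _).symm
  have h2 : ‖x - y‖ ^ 2 = ‖x‖ ^ 2 - 2 * ⟪x, y⟫ + ‖y‖ ^ 2 := by
    rw [@norm_sub_sq_real]
  have hxx : ⟪x, x⟫ = ‖x‖ ^ 2 := real_inner_self_eq_norm_sq x
  have hyy : ⟪y, y⟫ = ‖y‖ ^ 2 := real_inner_self_eq_norm_sq y
  have hyx : ⟪y, x⟫ = ⟪x, y⟫ := real_inner_comm x y
  rw [h1, h2]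
  simp only [inner_add_left, inner_add_right, real_inner_smul_left, real_inner_smul_right,
    hxx, hyy, hyx]
  linear_combination (a * ‖x‖ ^ 2 + b * ‖y‖ ^ 2) * hab

private lemma grad_ineq_of_convex' (h : E → ℝ) (hconv : ConvexOn ℝ Set.univ h) (x y : E) (D : ℝ)
    (hd : HasDerivAt (fun t : ℝ => h (x + t • (y - x))) D 0) : D ≤ h y - h x := by
  set φ : ℝ → ℝ := fun t => h (x + t • (y - x)) with hφ
  have hφconv : ConvexOn ℝ Set.univ φ := by
    have hc := hconv.comp_affineMap (AffineMap.lineMap x y)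
    have : ⇑(AffineMap.lineMap x y) ⁻¹' Set.univ = (Set.univ : Set ℝ) := Set.preimage_univ
    rw [this] at hc
    have hfeq : φ = h ∘ AffineMap.lineMap x y := by
      funext t
      simp [hφ, AffineMap.lineMap_apply, add_comm]
    rw [hfeq]
    exact hc
  have hslope : ∀ t ∈ Set.Ioo (0:ℝ) 1, (φ t - φ 0) / t ≤ φ 1 - φ 0 := by
    intro t ht
    have h01 := hφconv.2 (Set.mem_univ (0:ℝ)) (Set.mem_univ (1:ℝ))
      (by linarith [ht.2] : (0:ℝ) ≤ 1 - t) (le_of_lt ht.1) (by ring)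
    simp only [smul_eq_mul, mul_zero, mul_one, zero_add] at h01
    rw [div_le_iff₀ ht.1]
    nlinarith [h01]
  have htend : Tendsto (fun t => (φ t - φ 0) / t) (𝓝[>] 0) (𝓝 D) := by
    have h1 : Tendsto (slope φ 0) (𝓝[≠] 0) (𝓝 D) := hasDerivAt_iff_tendsto_slope.mp hd
    have h2 : Tendsto (slope φ 0) (𝓝[>] 0) (𝓝 D) :=
      h1.mono_left (nhdsWithin_mono _ fun t ht => ne_of_gt ht)
    refine h2.congr fun t => ?_
    rw [slope_def_field]
    rw [sub_zero]
  have hD : D ≤ φ 1 - φ 0 := by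
    refine le_of_tendsto htend ?_
    filter_upwards [Ioo_mem_nhdsGT_of_mem (by constructor <;> norm_num : (0:ℝ) ∈ Set.Ico 0 1)]
      with t ht using hslope t ht
  have hφ0 : φ 0 = h x := by simp [hφ]
  have hφ1 : φ 1 = h y := by simp [hφ]
  rw [hφ0, hφ1] at hD
  exact hD

end innerhelpers

/-- Quadratic functional growth of the energy: if `ℓ` is `μ`-strongly convex
and the base vector `u` has i.i.d. symmetric standardized components, then the energy
`f(λ) = E ℓ(C u + m)` (assumed finite and differentiable with gradient `gradf`) satisfies
`‖λ − λ'‖₂² ≤ (2/μ) D_f(λ, λ')` for all `λ, λ'`, where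
`D_f(λ, λ') = f(λ) − f(λ') − ⟨∇f(λ'), λ − λ'⟩` and
`‖λ − λ'‖₂² = ‖m − m'‖₂² + ‖C − C'‖_F²`. -/
theorem sq_dist_le_two_div_mu_mul_bregman
    {Ω : Type*} [MeasurableSpace Ω] (P : Measure Ω) [IsProbabilityMeasure P]
    {d : ℕ} (μ : ℝ) (hμ : 0 < μ)
    (ℓ : EuclideanSpace ℝ (Fin d) → ℝ)
    (gradℓ : EuclideanSpace ℝ (Fin d) → EuclideanSpace ℝ (Fin d))
    (hgradℓ : ∀ x, HasGradientAt ℓ (gradℓ x) x)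
    (hsc : ∀ x y, μ / 2 * ‖y - x‖ ^ 2 ≤ ℓ y - ℓ x - ⟪gradℓ x, y - x⟫)
    (u : Ω → Fin d → ℝ)
    (hmeas : ∀ i, Measurable fun ω => u ω i)
    (hindep : iIndepFun (fun i ω => u ω i) P)
    (hident : ∀ i j, IdentDistrib (fun ω => u ω i) (fun ω => u ω j) P P)
    (hsymm : ∀ i, IdentDistrib (fun ω => u ω i) (fun ω => -u ω i) P P)
    (hL2 : ∀ i, MemLp (fun ω => u ω i) 2 P)
    (hmean : ∀ i, ∫ ω, u ω i ∂P = 0)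
    (hvar : ∀ i, ∫ ω, (u ω i) ^ 2 ∂P = 1)
    (hthird : ∀ i, ∫ ω, (u ω i) ^ 3 ∂P = 0)
    (f : EuclideanSpace ℝ ((Fin d) ⊕ (Fin d × Fin d)) → ℝ)
    (hf : ∀ lam, f lam = ∫ ω, ℓ (fullReparam d lam (u ω)) ∂P)
    (hf_int : ∀ lam, Integrable (fun ω => ℓ (fullReparam d lam (u ω))) P)
    (gradf : EuclideanSpace ℝ ((Fin d) ⊕ (Fin d × Fin d)) →
      EuclideanSpace ℝ ((Fin d) ⊕ (Fin d × Fin d)))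
    (hgradf : ∀ lam, HasGradientAt f (gradf lam) lam) :
    ∀ lam lam' : EuclideanSpace ℝ ((Fin d) ⊕ (Fin d × Fin d)),
      ‖lam - lam'‖ ^ 2 ≤ (2 / μ) * (f lam - f lam' - ⟪gradf lam', lam - lam'⟫) := by
  -- Step 1: second-moment identity for the reparameterization
  have momRw : ∀ w : EuclideanSpace ℝ ((Fin d) ⊕ (Fin d × Fin d)),
      (fun ω => ‖fullReparam d w (u ω)‖ ^ 2)
        = fun ω => ∑ i, (∑ j, w (Sum.inr (i, j)) * u ω j + w (Sum.inl i)) ^ 2 :=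
    fun w => funext fun ω => norm_sq_reparam' d w (u ω)
  have momA : ∀ w : EuclideanSpace ℝ ((Fin d) ⊕ (Fin d × Fin d)),
      Integrable (fun ω => ‖fullReparam d w (u ω)‖ ^ 2) P := by
    intro w
    rw [momRw w]
    exact integrable_finset_sum _ fun i _ => row_integrable' hmeas hL2 _ _
  have momI : ∀ w : EuclideanSpace ℝ ((Fin d) ⊕ (Fin d × Fin d)),
      ∫ ω, ‖fullReparam d w (u ω)‖ ^ 2 ∂P = ‖w‖ ^ 2 := by
    intro w
    rw [momRw w, integral_finset_sum _ fun i _ => row_integrable' hmeas hL2 _ _,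
      euc_norm_sq_sum' d w]
    exact Finset.sum_congr rfl fun i _ => row_integral' hmeas hindep hL2 hmean hvar _ _
  -- Step 2: strong convexity of the energy f
  have hsf : ∀ (x y : EuclideanSpace ℝ ((Fin d) ⊕ (Fin d × Fin d))) (a b : ℝ),
      0 ≤ a → 0 ≤ b → a + b = 1 →
      f (a • x + b • y) ≤ a * f x + b * f y - μ / 2 * (a * b) * ‖x - y‖ ^ 2 := by
    intro x y a b ha hb hab
    have hpt : ∀ ω, ℓ (fullReparam d (a • x + b • y) (u ω))
        ≤ a * ℓ (fullReparam d x (u ω)) + b * ℓ (fullReparam d y (u ω))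
          - μ / 2 * (a * b) * ‖fullReparam d (x - y) (u ω)‖ ^ 2 := by
      intro ω
      rw [reparam_combo', ← reparam_sub']
      exact strong_combo' μ ℓ gradℓ hsc _ _ ha hb hab
    have hRint : Integrable (fun ω => a * ℓ (fullReparam d x (u ω))
        + b * ℓ (fullReparam d y (u ω))
        - μ / 2 * (a * b) * ‖fullReparam d (x - y) (u ω)‖ ^ 2) P :=
      (((hf_int x).const_mul a).add ((hf_int y).const_mul b)).sub ((momA (x - y)).const_mul _)
    have hInt2 : Integrable (fun ω => a * ℓ (fullReparam d x (u ω))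
        + b * ℓ (fullReparam d y (u ω))) P :=
      ((hf_int x).const_mul a).add ((hf_int y).const_mul b)
    calc f (a • x + b • y) = ∫ ω, ℓ (fullReparam d (a • x + b • y) (u ω)) ∂P := hf _
      _ ≤ ∫ ω, (a * ℓ (fullReparam d x (u ω)) + b * ℓ (fullReparam d y (u ω))
            - μ / 2 * (a * b) * ‖fullReparam d (x - y) (u ω)‖ ^ 2) ∂P :=
          integral_mono (hf_int _) hRint hpt
      _ = a * f x + b * f y - μ / 2 * (a * b) * ‖x - y‖ ^ 2 := by
          rw [integral_sub hInt2 ((momA (x - y)).const_mul _),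
            integral_add ((hf_int x).const_mul a) ((hf_int y).const_mul b),
            integral_const_mul, integral_const_mul, integral_const_mul, momI (x - y),
            ← hf, ← hf]
  -- Step 3: convexity of z ↦ f z - μ/2 ‖z‖²
  have hconv : ConvexOn ℝ Set.univ
      (fun z : EuclideanSpace ℝ ((Fin d) ⊕ (Fin d × Fin d)) => f z - μ / 2 * ‖z‖ ^ 2) := by
    refine ⟨convex_univ, ?_⟩
    intro x _ y _ a b ha hb hab
    have h1 := hsf x y a b ha hb hab
    have h2 := norm_combo' x y hab
    simp only [smul_eq_mul]
    nlinarith [h1, h2]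
  intro lam lam'
  set v := lam - lam' with hv
  -- Step 4: derivative of t ↦ (f - μ/2‖·‖²)(lam' + t • v) at 0
  have hγ : HasDerivAt (fun t : ℝ => lam' + t • v) v 0 := by
    have := ((hasDerivAt_id (0:ℝ)).smul_const v).const_add lam'
    simpa using this
  have hγ0 : lam' + (0:ℝ) • v = lam' := by simp
  have hderiv_f : HasDerivAt (fun t : ℝ => f (lam' + t • v)) ⟪gradf lam', v⟫ 0 := by
    have hF : HasFDerivAt f
        ((InnerProductSpace.toDual ℝ _) (gradf lam')) ((fun t : ℝ => lam' + t • v) 0) := by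
      rw [show (fun t : ℝ => lam' + t • v) 0 = lam' by simp]
      exact (hgradf lam').hasFDerivAt
    have hcomp := hF.comp_hasDerivAt (0:ℝ) hγ
    simpa [Function.comp_def, InnerProductSpace.toDual_apply_apply] using hcomp
  have hderiv_inner : HasDerivAt (fun t : ℝ => ⟪lam' + t • v, lam' + t • v⟫)
      (⟪lam', v⟫ + ⟪v, lam'⟫) 0 := by
    have := HasDerivAt.inner ℝ hγ hγ
    simpa using this
  have hφd : HasDerivAt
      (fun t : ℝ => f (lam' + t • v) - μ / 2 * ‖lam' + t • v‖ ^ 2)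
      (⟪gradf lam', v⟫ - μ / 2 * (⟪lam', v⟫ + ⟪v, lam'⟫)) 0 := by
    have hsub := hderiv_f.sub (hderiv_inner.const_mul (μ / 2))
    have hfuneq : (fun t : ℝ => f (lam' + t • v) - μ / 2 * ‖lam' + t • v‖ ^ 2)
        = fun t : ℝ => f (lam' + t • v) - μ / 2 * ⟪lam' + t • v, lam' + t • v⟫ :=
      funext fun t => by rw [real_inner_self_eq_norm_sq]
    rw [hfuneq]
    exact hsub
  -- Step 5: subgradient inequality for the convex shifted function
  have hD := grad_ineq_of_convex' _ hconv lam' lam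
    (⟪gradf lam', v⟫ - μ / 2 * (⟪lam', v⟫ + ⟪v, lam'⟫)) hφd
  have hcomm : ⟪v, lam'⟫ = ⟪lam', v⟫ := real_inner_comm lam' v
  have hps : ‖lam‖ ^ 2 = ‖lam'‖ ^ 2 + 2 * ⟪lam', v⟫ + ‖v‖ ^ 2 := by
    rw [show lam = lam' + v by rw [hv]; abel, norm_add_sq_real]
  have hps' : μ / 2 * ‖lam‖ ^ 2
      = μ / 2 * ‖lam'‖ ^ 2 + μ * ⟪lam', v⟫ + μ / 2 * ‖v‖ ^ 2 := by
    linear_combination (μ / 2) * hps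
  have hcomm' : μ / 2 * (⟪lam', v⟫ + ⟪v, lam'⟫) = μ * ⟪lam', v⟫ := by
    linear_combination (μ / 2) * hcomm
  have key : μ / 2 * ‖v‖ ^ 2 ≤ f lam - f lam' - ⟪gradf lam', v⟫ := by linarith
  calc ‖lam - lam'‖ ^ 2 = 2 / μ * (μ / 2 * ‖v‖ ^ 2) := by
        rw [← hv]; field_simp
    _ ≤ 2 / μ * (f lam - f lam' - ⟪gradf lam', v⟫) :=
        mul_le_mul_of_nonneg_left key (by positivity)
end

section
/- Let f : ℝ^p → ℝ be μ-strongly convex and differentiable, with global composite optimum λ* ∈ ℝ^p. Let P : ℝ^p → ℝ^p be a nonexpansive map (‖P(x) − P(y)‖₂ ≤ ‖x − y‖₂) satisfying the fixed-point property P(λ* − γ ∇f(λ*)) = λ*. Let g be a random vector with E g = ∇f(λ) at a point λ, satisfying E‖g − g*‖₂² ≤ 2𝓛 D_f(λ, λ*) for a coupled random vector g* with E g* = ∇f(λ*) and E‖g* − ∇f(λ*)‖₂² ≤ σ². Then for any stepsize 0 < γ ≤ 1/(2𝓛): E‖P(λ − γ g) − λ*‖₂² ≤ (1 − γμ) ‖λ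 − λ*‖₂² + 2γ²σ². -/
open MeasureTheory
open scoped RealInnerProductSpace

private lemma memL2_integrable_sq {Ω : Type*} [MeasurableSpace Ω] {P : Measure Ω}
    {E : Type*} [NormedAddCommGroup E] {h : Ω → E} (hf : MemLp h 2 P) :
    Integrable (fun ω => ‖h ω‖ ^ 2) P := by
  have := hf.integrable_norm_rpow two_ne_zero ENNReal.ofNat_ne_top
  convert this using 2 with ω
  rw [← Real.rpow_natCast]
  norm_num

set_option maxHeartbeats 1000000 in
/-- One-step contraction of stochastic proximal gradient descent: if `f` is
`μ`-strongly convex with gradient `∇f`, `Pmap` is nonexpansive with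
`Pmap(λ* − γ ∇f(λ*)) = λ*`, `g` is an unbiased gradient estimator at `λ`
(`E g = ∇f(λ)`) coupled with `g*` (`E g* = ∇f(λ*)`) so that
`E‖g − g*‖² ≤ 2𝓛 D_f(λ, λ*)` and `E‖g* − ∇f(λ*)‖² ≤ σ²`, then for `0 < γ ≤ 1/(2𝓛)`:
`E‖Pmap(λ − γ g) − λ*‖² ≤ (1 − γμ)‖λ − λ*‖² + 2γ²σ²`. -/
theorem proximal_sgd_one_step_contraction
    {Ω : Type*} [MeasurableSpace Ω] (P : Measure Ω) [IsProbabilityMeasure P]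
    {p : ℕ}
    (μ 𝓛 σsq γ : ℝ) (hμ : 0 < μ) (h𝓛 : 0 < 𝓛) (hσsq : 0 ≤ σsq)
    (hγpos : 0 < γ) (hγle : γ ≤ 1 / (2 * 𝓛))
    (f : EuclideanSpace ℝ (Fin p) → ℝ)
    (gradf : EuclideanSpace ℝ (Fin p) → EuclideanSpace ℝ (Fin p))
    (hgradf : ∀ x, HasGradientAt f (gradf x) x)
    (hsc : ∀ x y, μ / 2 * ‖y - x‖ ^ 2 ≤ f y - f x - ⟪gradf x, y - x⟫)
    (Pmap : EuclideanSpace ℝ (Fin p) → EuclideanSpace ℝ (Fin p))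
    (hPnonexp : ∀ x y, ‖Pmap x - Pmap y‖ ≤ ‖x - y‖)
    (lam lamstar : EuclideanSpace ℝ (Fin p))
    (hfix : Pmap (lamstar - γ • gradf lamstar) = lamstar)
    (g gstar : Ω → EuclideanSpace ℝ (Fin p))
    (hgL2 : MemLp g 2 P) (hgstarL2 : MemLp gstar 2 P)
    (hg_mean : ∫ ω, g ω ∂P = gradf lam)
    (hgstar_mean : ∫ ω, gstar ω ∂P = gradf lamstar)
    (hES : ∫ ω, ‖g ω - gstar ω‖ ^ 2 ∂P
      ≤ 2 * 𝓛 * (f lam - f lamstar - ⟪gradf lamstar, lam - lamstar⟫))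
    (hvar : ∫ ω, ‖gstar ω - gradf lamstar‖ ^ 2 ∂P ≤ σsq) :
    ∫ ω, ‖Pmap (lam - γ • g ω) - lamstar‖ ^ 2 ∂P
      ≤ (1 - γ * μ) * ‖lam - lamstar‖ ^ 2 + 2 * γ ^ 2 * σsq := by
  set a := lam - lamstar with ha
  set gs := gradf lamstar with hgs
  -- integrability facts
  have hg1 : Integrable g P := hgL2.integrable one_le_two
  have hgg : Integrable (fun ω => ‖g ω - gstar ω‖ ^ 2) P :=
    memL2_integrable_sq (hgL2.sub hgstarL2)
  have hgv : Integrable (fun ω => ‖gstar ω - gs‖ ^ 2) P :=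
    memL2_integrable_sq (hgstarL2.sub (memLp_const gs))
  have hinn : Integrable (fun ω => ⟪a, g ω - gs⟫) P :=
    (hg1.sub (integrable_const gs)).const_inner a
  -- define the majorant
  set ψ : Ω → ℝ := fun ω => ‖a‖ ^ 2 - 2 * γ * ⟪a, g ω - gs⟫
      + 2 * γ ^ 2 * ‖g ω - gstar ω‖ ^ 2 + 2 * γ ^ 2 * ‖gstar ω - gs‖ ^ 2 with hψ
  have hψint : Integrable ψ P := by
    apply Integrable.add
    apply Integrable.add
    · exact (integrable_const _).sub (hinn.const_mul _)
    · exact hgg.const_mul _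
    · exact hgv.const_mul _
  -- pointwise bound
  have hpt : ∀ ω, ‖Pmap (lam - γ • g ω) - lamstar‖ ^ 2 ≤ ψ ω := by
    intro ω
    have h1 : ‖Pmap (lam - γ • g ω) - lamstar‖ ≤ ‖a - γ • (g ω - gs)‖ := by
      have := hPnonexp (lam - γ • g ω) (lamstar - γ • gs)
      rw [hfix] at this
      convert this using 2
      rw [ha]
      module
    have h2 : ‖a - γ • (g ω - gs)‖ ^ 2
        = ‖a‖ ^ 2 - 2 * γ * ⟪a, g ω - gs⟫ + γ ^ 2 * ‖g ω - gs‖ ^ 2 := by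
      rw [norm_sub_sq_real, norm_smul, real_inner_smul_right]
      simp [abs_of_pos hγpos, mul_pow]
      ring
    have h3 : ‖g ω - gs‖ ^ 2 ≤ 2 * ‖g ω - gstar ω‖ ^ 2 + 2 * ‖gstar ω - gs‖ ^ 2 := by
      have hle := norm_add_le (g ω - gstar ω) (gstar ω - gs)
      have h4 : g ω - gs = (g ω - gstar ω) + (gstar ω - gs) := by abel
      have hsq : ‖g ω - gs‖ ^ 2 ≤ (‖g ω - gstar ω‖ + ‖gstar ω - gs‖) ^ 2 := by
        rw [h4]; exact pow_le_pow_left₀ (norm_nonneg _) hle 2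
      nlinarith [sq_nonneg (‖g ω - gstar ω‖ - ‖gstar ω - gs‖)]
    have h5 : ‖Pmap (lam - γ • g ω) - lamstar‖ ^ 2 ≤ ‖a - γ • (g ω - gs)‖ ^ 2 :=
      pow_le_pow_left₀ (norm_nonneg _) h1 2
    have h6 : γ ^ 2 * ‖g ω - gs‖ ^ 2
        ≤ γ ^ 2 * (2 * ‖g ω - gstar ω‖ ^ 2 + 2 * ‖gstar ω - gs‖ ^ 2) :=
      mul_le_mul_of_nonneg_left h3 (sq_nonneg γ)
    show _ ≤ ‖a‖ ^ 2 - 2 * γ * ⟪a, g ω - gs⟫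
      + 2 * γ ^ 2 * ‖g ω - gstar ω‖ ^ 2 + 2 * γ ^ 2 * ‖gstar ω - gs‖ ^ 2
    linarith
  -- integrate
  have hmono : ∫ ω, ‖Pmap (lam - γ • g ω) - lamstar‖ ^ 2 ∂P ≤ ∫ ω, ψ ω ∂P := by
    apply integral_mono_of_nonneg
    · exact Filter.Eventually.of_forall fun ω => sq_nonneg _
    · exact hψint
    · exact Filter.Eventually.of_forall hpt
  have hψval : ∫ ω, ψ ω ∂P = ‖a‖ ^ 2 - 2 * γ * ⟪a, gradf lam - gs⟫
      + 2 * γ ^ 2 * ∫ ω, ‖g ω - gstar ω‖ ^ 2 ∂P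
      + 2 * γ ^ 2 * ∫ ω, ‖gstar ω - gs‖ ^ 2 ∂P := by
    have I0 : Integrable (fun ω => 2 * γ * ⟪a, g ω - gs⟫) P := by
      exact hinn.const_mul _
    have I1 : Integrable (fun ω => ‖a‖ ^ 2 - 2 * γ * ⟪a, g ω - gs⟫) P := by
      exact (integrable_const _).sub I0
    have I2 : Integrable (fun ω => ‖a‖ ^ 2 - 2 * γ * ⟪a, g ω - gs⟫
        + 2 * γ ^ 2 * ‖g ω - gstar ω‖ ^ 2) P := by
      exact I1.add (hgg.const_mul _)
    have Ig : Integrable (fun ω => g ω - gs) P := by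
      exact hg1.sub (integrable_const gs)
    simp only [hψ]
    beta_reduce
    rw [integral_add I2 (hgv.const_mul _), integral_add I1 (hgg.const_mul _),
      integral_sub (integrable_const _) I0,
      integral_const, integral_const_mul, integral_const_mul, integral_const_mul,
      integral_inner Ig, integral_sub hg1 (integrable_const gs), integral_const, hg_mean]
    simp
  -- strong convexity facts
  have hD1 : μ / 2 * ‖a‖ ^ 2 ≤ f lam - f lamstar - ⟪gs, a⟫ := hsc lamstar lam
  have hD2 : μ / 2 * ‖a‖ ^ 2 ≤ f lamstar - f lam - ⟪gradf lam, lamstar - lam⟫ := by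
    have := hsc lam lamstar
    convert this using 3
    · rw [ha]; rw [← norm_neg]; congr 1; abel
  have hip : ⟪a, gradf lam - gs⟫ = ⟪gradf lam, a⟫ - ⟪gs, a⟫ := by
    rw [inner_sub_right, real_inner_comm, real_inner_comm a gs]
  have hneg : ⟪gradf lam, lamstar - lam⟫ = - ⟪gradf lam, a⟫ := by
    rw [ha, ← inner_neg_right]; congr 1; abel
  rw [hneg] at hD2
  -- combine
  have hγL : 2 * γ ^ 2 * (2 * 𝓛) ≤ 2 * γ := by
    have h2L : 0 < 2 * 𝓛 := by linarith
    have hγ' : γ * (2 * 𝓛) ≤ 1 := by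
      rw [le_div_iff₀ h2L] at hγle
      linarith
    calc 2 * γ ^ 2 * (2 * 𝓛) = 2 * γ * (γ * (2 * 𝓛)) := by ring
      _ ≤ 2 * γ * 1 := mul_le_mul_of_nonneg_left hγ' (by positivity)
      _ = 2 * γ := by ring
  set D : ℝ := f lam - f lamstar - ⟪gs, a⟫ with hDdef
  have hDnn : 0 ≤ D := le_trans (by positivity) hD1
  have hES' : ∫ ω, ‖g ω - gstar ω‖ ^ 2 ∂P ≤ 2 * 𝓛 * D := hES
  have key : ∫ ω, ψ ω ∂P ≤ (1 - γ * μ) * ‖a‖ ^ 2 + 2 * γ ^ 2 * σsq := by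
    rw [hψval, hip]
    have e1 : 2 * γ ^ 2 * ∫ ω, ‖g ω - gstar ω‖ ^ 2 ∂P ≤ 2 * γ ^ 2 * (2 * 𝓛 * D) :=
      mul_le_mul_of_nonneg_left hES' (by positivity)
    have e2 : 2 * γ ^ 2 * ∫ ω, ‖gstar ω - gs‖ ^ 2 ∂P ≤ 2 * γ ^ 2 * σsq :=
      mul_le_mul_of_nonneg_left hvar (by positivity)
    have e3' : μ / 2 * ‖a‖ ^ 2 + D ≤ ⟪gradf lam, a⟫ - ⟪gs, a⟫ := by
      rw [hDdef]; linarith [hD2]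
    have e3m : 2 * γ * (μ / 2 * ‖a‖ ^ 2 + D)
        ≤ 2 * γ * (⟪gradf lam, a⟫ - ⟪gs, a⟫) :=
      mul_le_mul_of_nonneg_left e3' (by positivity)
    have e4 : 2 * γ ^ 2 * (2 * 𝓛 * D) ≤ 2 * γ * D := by
      have := mul_le_mul_of_nonneg_right hγL hDnn
      calc 2 * γ ^ 2 * (2 * 𝓛 * D) = 2 * γ ^ 2 * (2 * 𝓛) * D := by ring
        _ ≤ 2 * γ * D := this
    nlinarith [e1, e2, e3m, e4]
  linarith
end

section
/- Let μ > 0, 𝓛 ≥ μ, σ² ≥ 0, and let (r_t)_{t≥0} be nonnegative reals satisfying r_{t+1} ≤ (1 − γ_t μ) r_t + 2 γ_t² σ² for all t, where the stepsize schedule is γ_t = 1/(2𝓛) for t < t* and γ_t = (1/μ)·(2t+1)/(t+1)² for t ≥ t*, with t* = 4⌊𝓛/μ⌋. Then for all T ≥ t*: r_{T+1} ≤ (16⌊𝓛/μ⌋²/(T+1)²) r_0 + (σ²/μ²)·8/(T+1). -/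
set_option maxHeartbeats 1000000 in
/-- Decaying-stepsize recursion bound (Gower et al.): let `μ > 0`,
`𝓛 ≥ μ`, `σ² ≥ 0`, and let `(r_t)` be nonnegative with
`r_{t+1} ≤ (1 − γ_t μ) r_t + 2 γ_t² σ²`, where `γ_t = 1/(2𝓛)` for `t < t*` and
`γ_t = (1/μ)(2t+1)/(t+1)²` for `t ≥ t*`, with `t* = 4⌊𝓛/μ⌋`. Then for all `T ≥ t*`:
`r_{T+1} ≤ (16⌊𝓛/μ⌋²/(T+1)²) r_0 + (σ²/μ²) · 8/(T+1)`. -/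
theorem decaying_stepsize_recursion_bound
    (μ 𝓛 σsq : ℝ) (hμ : 0 < μ) (h𝓛 : μ ≤ 𝓛) (hσsq : 0 ≤ σsq)
    (γ : ℕ → ℝ)
    (hγ : ∀ t, γ t = if t < 4 * ⌊𝓛 / μ⌋₊ then 1 / (2 * 𝓛)
      else (1 / μ) * (2 * (t : ℝ) + 1) / ((t : ℝ) + 1) ^ 2)
    (r : ℕ → ℝ) (hr : ∀ t, 0 ≤ r t)
    (hrec : ∀ t, r (t + 1) ≤ (1 - γ t * μ) * r t + 2 * (γ t) ^ 2 * σsq) :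
    ∀ T : ℕ, 4 * ⌊𝓛 / μ⌋₊ ≤ T →
      r (T + 1) ≤ (16 * (⌊𝓛 / μ⌋₊ : ℝ) ^ 2 / ((T : ℝ) + 1) ^ 2) * r 0
        + (σsq / μ ^ 2) * (8 / ((T : ℝ) + 1)) := by
  have h𝓛0 : (0:ℝ) < 𝓛 := lt_of_lt_of_le hμ h𝓛
  set k : ℕ := 4 * ⌊𝓛 / μ⌋₊ with hk
  set kR : ℝ := (⌊𝓛 / μ⌋₊ : ℝ) with hkR
  have hfloor1 : 1 ≤ ⌊𝓛 / μ⌋₊ := Nat.le_floor (by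
    rw [Nat.cast_one, le_div_iff₀ hμ]; linarith)
  have hkR1 : (1:ℝ) ≤ kR := by rw [hkR]; exact_mod_cast hfloor1
  have hkRμ : kR * μ ≤ 𝓛 := by
    have h := Nat.floor_le (le_of_lt (div_pos h𝓛0 hμ))
    rw [hkR]
    calc (⌊𝓛 / μ⌋₊ : ℝ) * μ ≤ (𝓛 / μ) * μ := by
          exact mul_le_mul_of_nonneg_right h (le_of_lt hμ)
      _ = 𝓛 := div_mul_cancel₀ _ (ne_of_gt hμ)
  have hkcast : (k : ℝ) = 4 * kR := by rw [hk, hkR]; push_cast; ring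
  -- Phase 1: r t ≤ r 0 + σsq / (𝓛 * μ) for all t ≤ k
  have hB : ∀ t, t ≤ k → r t ≤ r 0 + σsq / (𝓛 * μ) := by
    intro t
    induction t with
    | zero =>
      intro _
      have : 0 ≤ σsq / (𝓛 * μ) := div_nonneg hσsq (by positivity)
      linarith
    | succ n ih =>
      intro hn
      have hn' : n < k := lt_of_lt_of_le (Nat.lt_succ_self n) hn
      have hγn : γ n = 1 / (2 * 𝓛) := by rw [hγ, if_pos hn']
      have hrn := ih (le_of_lt hn')
      have hc : 0 ≤ 1 - 1 / (2 * 𝓛) * μ := by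
        have : 1 / (2 * 𝓛) * μ ≤ 1 / 2 := by
          rw [div_mul_eq_mul_div, div_le_div_iff₀ (by positivity) (by norm_num)]
          linarith
        linarith
      have h1 : (1 - 1 / (2 * 𝓛) * μ) * r n ≤ (1 - 1 / (2 * 𝓛) * μ) * (r 0 + σsq / (𝓛 * μ)) :=
        mul_le_mul_of_nonneg_left hrn hc
      have h2 := hrec n
      rw [hγn] at h2
      have key : (1 - 1 / (2 * 𝓛) * μ) * (r 0 + σsq / (𝓛 * μ)) + 2 * (1 / (2 * 𝓛)) ^ 2 * σsq
          ≤ r 0 + σsq / (𝓛 * μ) := by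
        have e1 : (1 - 1 / (2 * 𝓛) * μ) * (r 0 + σsq / (𝓛 * μ)) + 2 * (1 / (2 * 𝓛)) ^ 2 * σsq
            = r 0 + σsq / (𝓛 * μ) - (1 / (2 * 𝓛) * μ) * r 0 := by
          field_simp
          ring
        rw [e1]
        have : 0 ≤ (1 / (2 * 𝓛) * μ) * r 0 := mul_nonneg (by positivity) (hr 0)
        linarith
      linarith
  -- Phase 2 step: for t ≥ k, ((t:ℝ)+1)^2 * r (t+1) ≤ (t:ℝ)^2 * r t + 8 * σsq / μ^2
  have hstep : ∀ t, k ≤ t → ((t:ℝ)+1)^2 * r (t+1) ≤ (t:ℝ)^2 * r t + 8 * σsq / μ^2 := by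
    intro t ht
    have hγt : γ t = (1 / μ) * (2 * (t:ℝ) + 1) / ((t:ℝ) + 1) ^ 2 := by
      rw [hγ, if_neg (by omega)]
    have ht1 : (0:ℝ) < (t:ℝ) + 1 := by positivity
    have h2 := hrec t
    rw [hγt] at h2
    have h3 : ((t:ℝ)+1)^2 * r (t+1) ≤
        ((1 - (1 / μ) * (2 * (t:ℝ) + 1) / ((t:ℝ) + 1) ^ 2 * μ) * r t
          + 2 * ((1 / μ) * (2 * (t:ℝ) + 1) / ((t:ℝ) + 1) ^ 2) ^ 2 * σsq) * ((t:ℝ)+1)^2 := by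
      calc ((t:ℝ)+1)^2 * r (t+1) = r (t+1) * ((t:ℝ)+1)^2 := by ring
        _ ≤ _ := mul_le_mul_of_nonneg_right h2 (by positivity)
    have e1 : (1 - (1 / μ) * (2 * (t:ℝ) + 1) / ((t:ℝ) + 1) ^ 2 * μ) * ((t:ℝ)+1)^2
        = (t:ℝ)^2 := by
      field_simp
      ring
    have e2 : 2 * ((1 / μ) * (2 * (t:ℝ) + 1) / ((t:ℝ) + 1) ^ 2) ^ 2 * σsq * ((t:ℝ)+1)^2
        = 2 * σsq / μ^2 * ((2 * (t:ℝ) + 1)^2 / ((t:ℝ)+1)^2) := by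
      field_simp
    have e3 : (2 * (t:ℝ) + 1)^2 / ((t:ℝ)+1)^2 ≤ 4 := by
      rw [div_le_iff₀ (by positivity)]
      nlinarith [(Nat.cast_nonneg t : (0:ℝ) ≤ (t:ℝ))]
    have h4 : 2 * σsq / μ^2 * ((2 * (t:ℝ) + 1)^2 / ((t:ℝ)+1)^2) ≤ 8 * σsq / μ^2 := by
      have hσμ : 0 ≤ 2 * σsq / μ^2 := by positivity
      calc 2 * σsq / μ^2 * ((2 * (t:ℝ) + 1)^2 / ((t:ℝ)+1)^2)
          ≤ 2 * σsq / μ^2 * 4 := mul_le_mul_of_nonneg_left e3 hσμ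
        _ = 8 * σsq / μ^2 := by ring
    calc ((t:ℝ)+1)^2 * r (t+1)
        ≤ (t:ℝ)^2 * r t + 2 * ((1 / μ) * (2 * (t:ℝ) + 1) / ((t:ℝ) + 1) ^ 2) ^ 2 * σsq * ((t:ℝ)+1)^2 := by
          rw [← e1]; linarith [h3]
      _ = (t:ℝ)^2 * r t + 2 * σsq / μ^2 * ((2 * (t:ℝ) + 1)^2 / ((t:ℝ)+1)^2) := by rw [e2]
      _ ≤ (t:ℝ)^2 * r t + 8 * σsq / μ^2 := by linarith
  -- Phase 2 accumulation
  have main : ∀ T, k ≤ T →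
      ((T:ℝ)+1)^2 * r (T+1) ≤ (k:ℝ)^2 * r k + 8 * σsq / μ^2 * ((T:ℝ) + 1 - (k:ℝ)) := by
    intro T hT
    induction T, hT using Nat.le_induction with
    | base =>
      have := hstep k le_rfl
      have e : (k:ℝ) + 1 - (k:ℝ) = 1 := by ring
      rw [e]
      linarith
    | succ n hn ih =>
      have hs := hstep (n+1) (le_trans hn (Nat.le_succ n))
      push_cast at hs ih ⊢
      nlinarith
  -- Combine
  intro T hT
  have hmain := main T hT
  have hrk := hB k le_rfl
  have hT1 : (0:ℝ) < (T:ℝ) + 1 := by positivity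
  have hkT : (k:ℝ) ≤ (T:ℝ) := by exact_mod_cast hT
  -- bound (k:ℝ)^2 * r k
  have hb1 : (k:ℝ)^2 * r k ≤ 16 * kR^2 * r 0 + 16 * kR^2 * (σsq / (𝓛 * μ)) := by
    rw [hkcast]
    nlinarith [hr k, sq_nonneg kR]
  have hb2 : 16 * kR^2 * (σsq / (𝓛 * μ)) ≤ 16 * kR * (σsq / μ^2) := by
    have h𝓛μ : 0 < 𝓛 * μ := by positivity
    have hd : σsq / (𝓛 * μ) ≤ σsq / (kR * μ * μ) := by
      apply div_le_div_of_nonneg_left hσsq (by positivity)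
      nlinarith
    have hkR0 : kR ≠ 0 := by linarith
    calc 16 * kR^2 * (σsq / (𝓛 * μ)) ≤ 16 * kR^2 * (σsq / (kR * μ * μ)) :=
          mul_le_mul_of_nonneg_left hd (by positivity)
      _ = 16 * kR * (σsq / μ^2) := by
          field_simp
  have htotal : ((T:ℝ)+1)^2 * r (T+1) ≤ 16 * kR^2 * r 0 + 8 * σsq / μ^2 * ((T:ℝ) + 1) := by
    have h8 : 8 * σsq / μ^2 * ((T:ℝ) + 1 - (k:ℝ)) + 16 * kR * (σsq / μ^2)
        = 8 * σsq / μ^2 * ((T:ℝ) + 1) - 16 * kR * (σsq / μ^2) := by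
      rw [hkcast]; ring
    have h16 : 0 ≤ 16 * kR * (σsq / μ^2) := by positivity
    linarith [hmain, hb1, hb2, h8, h16]
  have hfinal : r (T+1) ≤ (16 * kR^2 * r 0 + 8 * σsq / μ^2 * ((T:ℝ) + 1)) / ((T:ℝ)+1)^2 := by
    rw [le_div_iff₀ (by positivity)]
    calc r (T+1) * ((T:ℝ)+1)^2 = ((T:ℝ)+1)^2 * r (T+1) := by ring
      _ ≤ _ := htotal
  calc r (T+1) ≤ (16 * kR^2 * r 0 + 8 * σsq / μ^2 * ((T:ℝ) + 1)) / ((T:ℝ)+1)^2 := hfinal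
    _ = (16 * kR ^ 2 / ((T : ℝ) + 1) ^ 2) * r 0 + (σsq / μ ^ 2) * (8 / ((T : ℝ) + 1)) := by
        field_simp
end

section
/- The function f : ℝ³ → ℝ given by f(x, y, z) = x² + z² + x² y² is not convex on the open positive orthant ℝ₊ × ℝ₊ × ℝ₊. Concretely, the determinant of its Hessian equals 8x²(1 − 3y²), which is negative whenever x > 0 and y > 1/√3, so the Hessian has a negative eigenvalue at such points. -/
/-!
Along the segment from `(2, 1, 1)` to `(1, 3, 1)` the term `x²y²` bulges above its chord
(the midpoint `(3/2, 2, 1)` gives `f = 49/4 > 10`), so `f` is not convex. For the Hessian,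
a real symmetric matrix with negative determinant has a negative eigenvalue, since the
determinant is the product of the eigenvalues.
-/

theorem Matrix.IsHermitian.exists_neg_hasEigenvalue_of_det_neg {n : Type*} [Fintype n]
    [DecidableEq n] {A : Matrix n n ℝ} (hA : A.IsHermitian) (hdet : A.det < 0) :
    ∃ t : ℝ, t < 0 ∧ Module.End.HasEigenvalue (Matrix.toLin' A) t := by
  obtain ⟨i, -, hi⟩ : ∃ i ∈ Finset.univ, hA.eigenvalues i < 0 := by
    by_contra! h
    rw [hA.det_eq_prod_eigenvalues] at hdet
    exact hdet.not_ge (Finset.prod_nonneg h)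
  refine ⟨hA.eigenvalues i, hi, Module.End.hasEigenvalue_iff_mem_spectrum.mpr ?_⟩
  rw [Matrix.spectrum_toLin']
  exact hA.eigenvalues_mem_spectrum_real i

theorem not_convexOn_sq_add_sq_add_sq_mul_sq :
    ¬ ConvexOn ℝ {p : ℝ × ℝ × ℝ | 0 < p.1 ∧ 0 < p.2.1 ∧ 0 < p.2.2}
        (fun p : ℝ × ℝ × ℝ => p.1 ^ 2 + p.2.2 ^ 2 + p.1 ^ 2 * p.2.1 ^ 2) := by
  intro hconv
  have hmid := hconv.2 (show ((2 : ℝ), (1 : ℝ), (1 : ℝ)) ∈ _ by norm_num)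
    (show ((1 : ℝ), (3 : ℝ), (1 : ℝ)) ∈ _ by norm_num)
    (show (0 : ℝ) ≤ 1 / 2 by norm_num) (show (0 : ℝ) ≤ 1 / 2 by norm_num) (by norm_num)
  norm_num at hmid

theorem det_energy_hessian (x y : ℝ) :
    (Matrix.of ![![2 + 2 * y ^ 2, 4 * x * y, 0],
                 ![4 * x * y, 2 * x ^ 2, 0],
                 ![0, 0, 2]] : Matrix (Fin 3) (Fin 3) ℝ).det
      = 8 * x ^ 2 * (1 - 3 * y ^ 2) := by
  simp only [Matrix.det_fin_three, Matrix.of_apply, Matrix.cons_val, Matrix.cons_val_zero,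
    Matrix.cons_val_one]
  ring

theorem one_sub_three_mul_sq_neg {y : ℝ} (hy : 1 / Real.sqrt 3 < y) : 1 - 3 * y ^ 2 < 0 := by
  have hsqrt : 1 / Real.sqrt 3 = Real.sqrt (1 / 3) := by
    rw [Real.sqrt_div' _ (by norm_num : (0 : ℝ) ≤ 3), Real.sqrt_one]
  rw [hsqrt, Real.sqrt_lt' (by linarith [Real.sqrt_nonneg (1 / 3)])] at hy
  linarith

/-- The function `f(x, y, z) = x² + z² + x²y²` is not convex on the open
positive orthant; concretely, its Hessian has determinant `8x²(1 − 3y²)`, which is negative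
whenever `x > 0` and `y > 1/√3`, so the Hessian has a negative eigenvalue at such points. -/
theorem nonconvexity_of_nonstandardized_energy :
    ¬ ConvexOn ℝ {p : ℝ × ℝ × ℝ | 0 < p.1 ∧ 0 < p.2.1 ∧ 0 < p.2.2}
        (fun p : ℝ × ℝ × ℝ => p.1 ^ 2 + p.2.2 ^ 2 + p.1 ^ 2 * p.2.1 ^ 2) ∧
      (∀ x y : ℝ,
        (Matrix.of ![![2 + 2 * y ^ 2, 4 * x * y, 0],
                     ![4 * x * y, 2 * x ^ 2, 0],
                     ![0, 0, 2]] : Matrix (Fin 3) (Fin 3) ℝ).det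
          = 8 * x ^ 2 * (1 - 3 * y ^ 2)) ∧
      (∀ x y : ℝ, 0 < x → 1 / Real.sqrt 3 < y →
        ∃ t : ℝ, t < 0 ∧
          Module.End.HasEigenvalue
            (Matrix.toLin' (Matrix.of ![![2 + 2 * y ^ 2, 4 * x * y, 0],
                                        ![4 * x * y, 2 * x ^ 2, 0],
                                        ![0, 0, 2]] : Matrix (Fin 3) (Fin 3) ℝ)) t) := by
  refine ⟨not_convexOn_sq_add_sq_add_sq_mul_sq, det_energy_hessian, fun x y hx hy => ?_⟩
  apply Matrix.IsHermitian.exists_neg_hasEigenvalue_of_det_neg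
  · ext i j
    fin_cases i <;> fin_cases j <;> rfl
  · rw [det_energy_hessian]
    exact mul_neg_of_pos_of_neg (by positivity) (one_sub_three_mul_sq_neg hy)
end
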